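/- arXiv:1903.08030 — 10 statements merged into one kernel-verified Lean document; each statement's English description precedes it below -/
import Mathlib

section
/- The vectors v_1, …, v_{2n+1} ∈ ℝ × ℂⁿ ≅ ℝ^{2n+1} are linearly independent over ℝ. -/
open Matrix Polynomial

/-!
Suppose a real vector `c` satisfies `∑ cᵢ vᵢ = 0`, i.e. the complex functional `x ↦ ∑ cᵢ xᵢ`
vanishes on `a` and on `W`. Since `c` and `M` are real, complex conjugation carries the
generalized eigenspaces for the `conj βⱼ` into `W`, so the functional vanishes on them as well.
As `α` is a simple root of the characteristic polynomial, its generalized eigenspace is the line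
through `a`; together with the generalized eigenspaces for the `βⱼ` and the `conj βⱼ` it spans
`ℂ^{2n+1}`, hence `c = 0`.
-/

namespace Matrix

variable {ι R : Type*} [Fintype ι] [CommRing R] [StarRing R]

theorem star_mulVec_of_map_star {A : Matrix ι ι R} (hA : A.map star = A) (v : ι → R) :
    star (A *ᵥ v) = A *ᵥ star v := by
  conv_rhs => rw [← hA]
  ext i
  simp [mulVec, dotProduct]

theorem star_mem_maxGenEigenspace_of_map_star {A : Matrix ι ι R} (hA : A.map star = A)
    {μ : R} {x : ι → R} (hx : x ∈ Module.End.maxGenEigenspace A.mulVecLin μ) :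
    star x ∈ Module.End.maxGenEigenspace A.mulVecLin (star μ) := by
  have hpow : ∀ (k : ℕ) (y : ι → R), ((A.mulVecLin - star μ • 1) ^ k) (star y)
      = star (((A.mulVecLin - μ • 1) ^ k) y) := by
    intro k
    induction k with
    | zero => simp
    | succ k ih =>
      intro y
      simp [pow_succ', ih, star_mulVec_of_map_star hA, star_sub, star_smul]
  rw [Module.End.mem_maxGenEigenspace] at hx ⊢
  obtain ⟨k, hk⟩ := hx
  exact ⟨k, by rw [hpow, hk, star_zero]⟩

theorem star_mem_iSup_maxGenEigenspace_of_map_star {κ : Type*} {A : Matrix ι ι R}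
    (hA : A.map star = A) {μ : κ → R} {x : ι → R}
    (hx : x ∈ ⨆ j, Module.End.maxGenEigenspace A.mulVecLin (star (μ j))) :
    star x ∈ ⨆ j, Module.End.maxGenEigenspace A.mulVecLin (μ j) := by
  refine Submodule.iSup_induction _ (motive := fun y => star y ∈ _) hx (fun j y hy => ?_)
    (by simp) (fun y z hy hz => by simpa using add_mem hy hz)
  exact Submodule.mem_iSup_of_mem j
    (by simpa using star_mem_maxGenEigenspace_of_map_star hA hy)

theorem eq_zero_of_dotProduct_eq_zero_of_sup_eq_top [DecidableEq ι] {u : ι → R}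
    (hu : star u = u) {S : Set (ι → R)} {Q : Submodule R (ι → R)}
    (hSQ : Submodule.span R S ⊔ Q = ⊤) (hQ : ∀ x ∈ Q, star x ∈ Submodule.span R S)
    (huS : ∀ x ∈ S, u ⬝ᵥ x = 0) : u = 0 := by
  have huP : ∀ x ∈ Submodule.span R S, u ⬝ᵥ x = 0 := fun x hx =>
    (Submodule.span_le (p := LinearMap.ker (dotProductBilin R R u)) |>.mpr huS) hx
  have huQ : ∀ x ∈ Q, u ⬝ᵥ x = 0 := fun x hx => by
    rw [← star_star x, dotProduct_star, hu, dotProduct_comm, huP _ (hQ x hx), star_zero]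
  ext i
  obtain ⟨p, hp, q, hq, hpq⟩ :=
    Submodule.mem_sup.mp (hSQ ▸ Submodule.mem_top (x := Pi.single i 1))
  simpa [← hpq, dotProduct_add, huP p hp, huQ q hq] using (dotProduct_single_one u i).symm

end Matrix

namespace Module.End

variable {K V : Type*} [Field K] [AddCommGroup V] [Module K V] [FiniteDimensional K V]

theorem maxGenEigenspace_eq_bot_of_not_isRoot_charpoly {f : End K V} {μ : K}
    (hμ : ¬ f.charpoly.IsRoot μ) : f.maxGenEigenspace μ = ⊥ := by
  rw [← Submodule.finrank_eq_zero, LinearMap.finrank_maxGenEigenspace_eq]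
  exact rootMultiplicity_eq_zero hμ

theorem eq_top_of_forall_isRoot_charpoly_maxGenEigenspace_le [IsAlgClosed K]
    {f : End K V} {P : Submodule K V}
    (h : ∀ μ, f.charpoly.IsRoot μ → f.maxGenEigenspace μ ≤ P) : P = ⊤ := by
  rw [eq_top_iff, ← iSup_maxGenEigenspace_eq_top f, iSup_le_iff]
  intro μ
  by_cases hμ : f.charpoly.IsRoot μ
  · exact h μ hμ
  · simp [maxGenEigenspace_eq_bot_of_not_isRoot_charpoly hμ]

theorem maxGenEigenspace_eq_span_singleton_of_charpoly_eq {f : End K V} {μ : K} {q : K[X]}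
    (hf : f.charpoly = (X - C μ) * q) (hq : ¬ q.IsRoot μ) {x : V} (hx : f x = μ • x)
    (hx0 : x ≠ 0) : f.maxGenEigenspace μ = K ∙ x := by
  have hq0 : q ≠ 0 := by rintro rfl; exact hq (by simp)
  have hdim : Module.finrank K (f.maxGenEigenspace μ) = 1 := by
    rw [LinearMap.finrank_maxGenEigenspace_eq, hf, mul_comm, ← pow_one (X - C μ),
      rootMultiplicity_mul_X_sub_C_pow hq0, rootMultiplicity_eq_zero hq]
  have hmem : x ∈ f.maxGenEigenspace μ :=
    eigenspace_le_maxGenEigenspace (mem_eigenspace_iff.mpr hx)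
  refine (Submodule.eq_of_le_of_finrank_le
    ((Submodule.span_singleton_le_iff_mem _ _).mpr hmem) ?_).symm
  rw [hdim, finrank_span_singleton hx0]

end Module.End

theorem Complex.ofReal_ne_and_ne_star_of_im_pos {z : ℂ} (hz : 0 < z.im) (r : ℝ) :
    (r : ℂ) ≠ z ∧ (r : ℂ) ≠ star z := by
  constructor <;> intro h <;> have him := congrArg Complex.im h <;>
    simp only [Complex.ofReal_im, Complex.star_def, Complex.conj_im] at him <;> linarith

theorem linearIndependent_real_prod_of_dotProduct {ι κ : Type*} [Fintype ι] {a : ι → ℝ}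
    {b : κ → ι → ℂ}
    (h : ∀ c : ι → ℝ, (fun i => (c i : ℂ)) ⬝ᵥ (fun i => (a i : ℂ)) = 0 →
      (∀ j, (fun i => (c i : ℂ)) ⬝ᵥ b j = 0) → c = 0) :
    LinearIndependent ℝ (fun i => ((a i, fun j => b j i) : ℝ × (κ → ℂ))) := by
  rw [Fintype.linearIndependent_iff]
  intro c hc
  refine congrFun (h c ?_ fun j => ?_)
  · have hca := congrArg Prod.fst hc
    simp only [Prod.fst_sum, Prod.smul_fst, smul_eq_mul, Prod.fst_zero] at hca
    simp [dotProduct, ← Complex.ofReal_mul, ← Complex.ofReal_sum, hca]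
  · have hcb := congrFun (congrArg Prod.snd hc) j
    simpa [Prod.snd_sum, Finset.sum_apply, Complex.real_smul, dotProduct] using hcb

open Module.End in
theorem inoue_lemmaA_general
    (n : ℕ)
    (M : Matrix (Fin (2*n+1)) (Fin (2*n+1)) ℤ)
    (α : ℝ)
    (β : Fin n → ℂ) (hβ : ∀ j, 0 < (β j).im)
    (hchar : (M.map (Int.cast : ℤ → ℂ)).charpoly
      = (X - C (α : ℂ)) * ∏ j, ((X - C (β j)) * (X - C (starRingEnd ℂ (β j)))))
    (a : Fin (2*n+1) → ℝ) (ha0 : a ≠ 0)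
    (ha : (M.map (Int.cast : ℤ → ℝ)).mulVec a = α • a)
    (b : Fin n → (Fin (2*n+1) → ℂ))
    (hbspan : Submodule.span ℂ (Set.range b)
      = ⨆ i, Module.End.maxGenEigenspace
        (Matrix.mulVecLin (M.map (Int.cast : ℤ → ℂ))) (β i)) :
    LinearIndependent ℝ
      (fun i : Fin (2*n+1) => ((a i, fun j => b j i) : ℝ × (Fin n → ℂ))) := by
  set A := M.map (Int.cast : ℤ → ℂ)
  set aC : Fin (2*n+1) → ℂ := fun i => (a i : ℂ)
  have hA : A.map star = A := by ext; simp [A]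
  have hα : maxGenEigenspace A.mulVecLin α = ℂ ∙ aC := by
    refine maxGenEigenspace_eq_span_singleton_of_charpoly_eq
      (by rw [charpoly_mulVecLin, hchar]) ?_ ?_ ?_
    · simpa [eval_prod, Finset.prod_eq_zero_iff, sub_eq_zero] using fun j => Complex.ofReal_ne_and_ne_star_of_im_pos (hβ j) α
    · ext i
      simpa [A, aC, mulVec, dotProduct] using congrArg (fun r : ℝ => (r : ℂ)) (congrFun ha i)
    · exact fun h => ha0 (funext fun i => by simpa [aC] using congrFun h i)
  have htop : (ℂ ∙ aC ⊔ Submodule.span ℂ (Set.range b)) ⊔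
      ⨆ j, maxGenEigenspace A.mulVecLin (star (β j)) = ⊤ := by
    refine eq_top_of_forall_isRoot_charpoly_maxGenEigenspace_le (f := A.mulVecLin)
      fun μ hμ => ?_
    obtain rfl | ⟨j, rfl | rfl⟩ : μ = α ∨ ∃ j, μ = β j ∨ μ = star (β j) := by
      simpa [charpoly_mulVecLin, hchar, eval_prod, Finset.prod_eq_zero_iff, sub_eq_zero] using hμ
    · exact hα ▸ le_sup_left.trans le_sup_left
    · exact hbspan ▸ (le_iSup (fun j => maxGenEigenspace A.mulVecLin (β j)) j).trans
        (le_sup_right.trans le_sup_left)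
    · exact (le_iSup (fun j => maxGenEigenspace A.mulVecLin (star (β j))) j).trans
        le_sup_right
  refine linearIndependent_real_prod_of_dotProduct fun c hca hcb => funext fun i => ?_
  have hc := eq_zero_of_dotProduct_eq_zero_of_sup_eq_top (u := fun i => (c i : ℂ))
    (S := insert aC (Set.range b)) (by ext; simp) (by rwa [Submodule.span_insert])
    (fun x hx => Submodule.span_mono (Set.subset_insert _ _)
      (hbspan ▸ star_mem_iSup_maxGenEigenspace_of_map_star hA hx))
    (by rintro _ (rfl | ⟨j, rfl⟩); exacts [hca, hcb j])
  simpa using congrFun hc i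

/-- **Lemma A** (Endo–Pajitnov, "On generalized Inoue manifolds").
Let `M ∈ SL(2n+1, ℤ)` whose characteristic polynomial over `ℂ` factors as
`(X - α) ∏ⱼ (X - βⱼ)(X - conj βⱼ)` with `α` real, positive, `≠ 1`, irrational and
`Im βⱼ > 0`.  Let `a` be a real eigenvector of `M` for `α` and `b₁, …, bₙ` a `ℂ`-basis of
the sum `W` of the generalized eigenspaces of `M` for the `βⱼ`.  Then the vectors
`vᵢ = (a⁽ⁱ⁾, b₁⁽ⁱ⁾, …, bₙ⁽ⁱ⁾) ∈ ℝ × ℂⁿ` (`i = 1, …, 2n+1`) are linearly independent over `ℝ`. -/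
theorem inoue_lemmaA
    (n : ℕ) (hn : 1 ≤ n)
    (M : Matrix (Fin (2*n+1)) (Fin (2*n+1)) ℤ) (hdet : M.det = 1)
    (α : ℝ) (hα0 : 0 < α) (hα1 : α ≠ 1) (hαirr : Irrational α)
    (β : Fin n → ℂ) (hβ : ∀ j, 0 < (β j).im)
    (hchar : (M.map (Int.cast : ℤ → ℂ)).charpoly
      = (X - C (α : ℂ)) * ∏ j, ((X - C (β j)) * (X - C (starRingEnd ℂ (β j)))))
    (a : Fin (2*n+1) → ℝ) (ha0 : a ≠ 0)
    (ha : (M.map (Int.cast : ℤ → ℝ)).mulVec a = α • a)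
    (b : Fin n → (Fin (2*n+1) → ℂ))
    (hbmem : ∀ j, b j ∈ ⨆ i, Module.End.maxGenEigenspace
        (Matrix.mulVecLin (M.map (Int.cast : ℤ → ℂ))) (β i))
    (hbind : LinearIndependent ℂ b)
    (hbspan : Submodule.span ℂ (Set.range b)
      = ⨆ i, Module.End.maxGenEigenspace
        (Matrix.mulVecLin (M.map (Int.cast : ℤ → ℂ))) (β i)) :
    LinearIndependent ℝ
      (fun i : Fin (2*n+1) => ((a i, fun j => b j i) : ℝ × (Fin n → ℂ))) :=
  inoue_lemmaA_general n M α β hβ hchar a ha0 ha b hbspan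
end

section
/- For every i ∈ {1, …, 2n+1} and every point p = (w, z) ∈ ℂ × ℂⁿ, one has g₀(p + u_i) = g₀(p) + Σ_{j=1}^{2n+1} m_{ij} u_j. Equivalently, g₀ g_i g₀^{-1} = g₁^{m_{i1}} ⋯ g_{2n+1}^{m_{i,2n+1}} as transformations; in particular H_M is a normal subgroup of G_M. -/
open Matrix Polynomial

/-- The translation vectors `uᵢ = (a⁽ⁱ⁾, b₁⁽ⁱ⁾, …, bₙ⁽ⁱ⁾) ∈ ℂ × ℂⁿ`. -/
def inoueU (n : ℕ) (a : Fin (2*n+1) → ℝ) (b : Fin n → (Fin (2*n+1) → ℂ))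
    (i : Fin (2*n+1)) : ℂ × (Fin n → ℂ) :=
  ((a i : ℂ), fun j => b j i)

/-!
The map `g₀` is linear, so conjugating the translation by `v` gives the translation by `g₀ v`.
The eigen-relations `M a = α a` and `M bⱼ = ∑ₗ R_{ℓj} bₗ`, read row by row, say exactly that
`g₀ uᵢ = ∑ⱼ m_{ij} uⱼ`. Hence `g₀` maps the lattice spanned by the `uᵢ` into itself, and since `M`
is invertible over `ℤ`, also `g₀⁻¹ uᵢ = ∑ⱼ (M⁻¹)_{ij} uⱼ`; so `g₀` normalizes `H_M`.
-/

theorem Subgroup.mem_normalizer_closure_of_conj_mem {G : Type*} [Group G] {s : Set G} {g : G}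
    (h₁ : ∀ x ∈ s, g * x * g⁻¹ ∈ Subgroup.closure s)
    (h₂ : ∀ x ∈ s, g⁻¹ * x * g ∈ Subgroup.closure s) :
    g ∈ Subgroup.normalizer (Subgroup.closure s : Set G) := by
  have conj_le : ∀ k : G, (∀ x ∈ s, k * x * k⁻¹ ∈ Subgroup.closure s) →
      ∀ x ∈ Subgroup.closure s, k * x * k⁻¹ ∈ Subgroup.closure s := by
    intro k hk x hx
    induction hx using Subgroup.closure_induction with
    | mem x hx => exact hk x hx
    | one => simp
    | mul x y _ _ hx hy => simpa [mul_assoc] using mul_mem hx hy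
    | inv x _ hx => simpa [mul_assoc] using inv_mem hx
  refine Subgroup.mem_normalizer_iff.2 fun x => ⟨conj_le g h₁ x, fun hx => ?_⟩
  simpa [mul_assoc] using conj_le g⁻¹ (by simpa using h₂) _ hx

theorem AddEquiv.toEquiv_mul_addRight_mul_inv {V : Type*} [AddGroup V] (e : V ≃+ V) (v : V) :
    e.toEquiv * Equiv.addRight v * e.toEquiv⁻¹ = Equiv.addRight (e v) := by
  ext p
  simp

section Translations

variable {V ι : Type*} [AddCommGroup V] (u : ι → V)

theorem Equiv.addRight_mem_closure_range {v : V} (hv : v ∈ AddSubgroup.closure (Set.range u)) :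
    Equiv.addRight v ∈ Subgroup.closure (Set.range fun i => Equiv.addRight (u i)) := by
  induction hv using AddSubgroup.closure_induction with
  | mem x hx =>
    obtain ⟨i, rfl⟩ := hx
    exact Subgroup.subset_closure ⟨i, rfl⟩
  | zero => simp
  | add x y _ _ hx hy => simpa [add_comm] using mul_mem hy hx
  | neg x _ hx => simpa using inv_mem hx

variable [Fintype ι] {u}

theorem map_sum_zsmul_of_map_eq {F : Type*} [FunLike F V V] [AddMonoidHomClass F V V] {f : F}
    {M : Matrix ι ι ℤ} (hf : ∀ i, f (u i) = ∑ j, M i j • u j) (c : ι → ℤ) :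
    f (∑ j, c j • u j) = ∑ k, (c ᵥ* M) k • u k := by
  simp only [map_sum, map_zsmul, hf, Finset.smul_sum, smul_smul, vecMul, dotProduct,
    Finset.sum_smul]
  exact Finset.sum_comm

theorem AddEquiv.symm_apply_eq_sum_inv [DecidableEq ι] {e : V ≃+ V} {M : Matrix ι ι ℤ}
    (hM : IsUnit M.det) (he : ∀ i, e (u i) = ∑ j, M i j • u j) (i : ι) :
    e.symm (u i) = ∑ j, M⁻¹ i j • u j := by
  rw [e.symm_apply_eq, map_sum_zsmul_of_map_eq he, ← mul_apply_eq_vecMul, nonsing_inv_mul _ hM]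
  simp [one_apply]

theorem AddEquiv.toEquiv_mem_normalizer_closure_addRight [DecidableEq ι] {e : V ≃+ V}
    {M : Matrix ι ι ℤ} (hM : IsUnit M.det) (he : ∀ i, e (u i) = ∑ j, M i j • u j) :
    e.toEquiv ∈ Subgroup.normalizer
      (Subgroup.closure (Set.range fun i => Equiv.addRight (u i)) : Set (Equiv.Perm V)) := by
  have sum_mem (c : ι → ℤ) : ∑ j, c j • u j ∈ AddSubgroup.closure (Set.range u) :=
    AddSubgroup.sum_mem _ fun j _ =>
      AddSubgroup.zsmul_mem _ (AddSubgroup.subset_closure (Set.mem_range_self j)) _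
  apply Subgroup.mem_normalizer_closure_of_conj_mem
  · rintro _ ⟨i, rfl⟩
    rw [e.toEquiv_mul_addRight_mul_inv, he]
    exact Equiv.addRight_mem_closure_range u (sum_mem _)
  · rintro _ ⟨i, rfl⟩
    change e.symm.toEquiv * Equiv.addRight (u i) * e.symm.toEquiv⁻¹ ∈ _
    rw [e.symm.toEquiv_mul_addRight_mul_inv, AddEquiv.symm_apply_eq_sum_inv hM he]
    exact Equiv.addRight_mem_closure_range u (sum_mem _)

end Translations

theorem inoueU_eigen_relation {n : ℕ} {M : Matrix (Fin (2*n+1)) (Fin (2*n+1)) ℤ} {α : ℝ}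
    {a : Fin (2*n+1) → ℝ} (ha : (M.map (Int.cast : ℤ → ℝ)) *ᵥ a = α • a)
    {b : Fin n → (Fin (2*n+1) → ℂ)} {R : Matrix (Fin n) (Fin n) ℂ}
    (hR : ∀ j, (M.map (Int.cast : ℤ → ℂ)) *ᵥ b j = ∑ ℓ, R ℓ j • b ℓ) (i : Fin (2*n+1)) :
    ((α : ℂ) * (inoueU n a b i).1, Rᵀ *ᵥ (inoueU n a b i).2) = ∑ j, M i j • inoueU n a b j := by
  refine Prod.ext ?_ (funext fun ℓ => ?_)
  · have hai := congrFun ha i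
    simp only [mulVec, dotProduct, map_apply, Pi.smul_apply, smul_eq_mul] at hai
    simp only [inoueU, Prod.fst_sum, Prod.smul_fst]
    push_cast [zsmul_eq_mul]
    exact_mod_cast hai.symm
  · have hbi := congrFun (hR ℓ) i
    simp only [mulVec, dotProduct, map_apply, Finset.sum_apply, Pi.smul_apply, smul_eq_mul] at hbi
    simp only [inoueU, Prod.snd_sum, Prod.smul_snd, Finset.sum_apply, Pi.smul_apply, mulVec,
      dotProduct, transpose_apply]
    simp only [zsmul_eq_mul]
    exact hbi.symm

theorem inoue_lemmaC_general
    (n : ℕ)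
    (M : Matrix (Fin (2*n+1)) (Fin (2*n+1)) ℤ) (hdet : M.det = 1)
    (α : ℝ)
    (a : Fin (2*n+1) → ℝ)
    (ha : (M.map (Int.cast : ℤ → ℝ)).mulVec a = α • a)
    (b : Fin n → (Fin (2*n+1) → ℂ))
    (R : Matrix (Fin n) (Fin n) ℂ)
    (hR : ∀ j, (M.map (Int.cast : ℤ → ℂ)).mulVec (b j) = ∑ ℓ, R ℓ j • b ℓ)
    (g₀ : Equiv.Perm (ℂ × (Fin n → ℂ)))
    (hg₀ : ∀ p : ℂ × (Fin n → ℂ), g₀ p = ((α : ℂ) * p.1, Rᵀ.mulVec p.2)) :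
    (∀ (i : Fin (2*n+1)) (p : ℂ × (Fin n → ℂ)),
        g₀ (p + inoueU n a b i) = g₀ p + ∑ j, M i j • inoueU n a b j)
      ∧ (∀ i : Fin (2*n+1),
          g₀ * Equiv.addRight (inoueU n a b i) * g₀⁻¹
            = Equiv.addRight (∑ j, M i j • inoueU n a b j))
      ∧ (∀ g ∈ Subgroup.closure
            ({g₀} ∪ Set.range fun i : Fin (2*n+1) => Equiv.addRight (inoueU n a b i)),
          ∀ h ∈ Subgroup.closure
            (Set.range fun i : Fin (2*n+1) => Equiv.addRight (inoueU n a b i)),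
          g * h * g⁻¹ ∈ Subgroup.closure
            (Set.range fun i : Fin (2*n+1) => Equiv.addRight (inoueU n a b i))) := by
  have hadd (p q : ℂ × (Fin n → ℂ)) : g₀ (p + q) = g₀ p + g₀ q := by
    simp only [hg₀, Prod.fst_add, Prod.snd_add, mul_add, mulVec_add, Prod.mk_add_mk]
  let e : (ℂ × (Fin n → ℂ)) ≃+ (ℂ × (Fin n → ℂ)) := AddEquiv.mk' g₀ hadd
  have he (i : Fin (2*n+1)) : e (inoueU n a b i) = ∑ j, M i j • inoueU n a b j :=
    (hg₀ _).trans (inoueU_eigen_relation ha hR i)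
  set S := Set.range fun i : Fin (2*n+1) => Equiv.addRight (inoueU n a b i)
  have hnorm : Subgroup.closure ({g₀} ∪ S) ≤ Subgroup.normalizer (Subgroup.closure S : Set _) :=
    Subgroup.closure_le _ |>.2 <| Set.union_subset
      (Set.singleton_subset_iff.2 <|
        e.toEquiv_mem_normalizer_closure_addRight (hdet ▸ isUnit_one) he)
      (Subgroup.subset_closure.trans Subgroup.le_normalizer)
  refine ⟨fun i p => by rw [hadd, ← he]; rfl, fun i => ?_,
    fun g hg h hh => (Subgroup.mem_normalizer_iff.1 (hnorm hg) h).1 hh⟩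
  rw [← he]
  exact e.toEquiv_mul_addRight_mul_inv _

/-- **Lemma C** (Endo–Pajitnov).  With `g₀(w, z) = (α w, Rᵀ z)` and `gᵢ = (translation by uᵢ)`,
for every `i` and every point `p ∈ ℂ × ℂⁿ` one has
`g₀(p + uᵢ) = g₀(p) + ∑ⱼ m_{ij} uⱼ`; equivalently
`g₀ gᵢ g₀⁻¹ = g₁^{m_{i1}} ⋯ g_{2n+1}^{m_{i,2n+1}}`; in particular `H_M ⊴ G_M`. -/
theorem inoue_lemmaC
    (n : ℕ) (hn : 1 ≤ n)
    (M : Matrix (Fin (2*n+1)) (Fin (2*n+1)) ℤ) (hdet : M.det = 1)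
    (α : ℝ) (hα0 : 0 < α) (hα1 : α ≠ 1) (hαirr : Irrational α)
    (β : Fin n → ℂ) (hβ : ∀ j, 0 < (β j).im)
    (hchar : (M.map (Int.cast : ℤ → ℂ)).charpoly
      = (X - C (α : ℂ)) * ∏ j, ((X - C (β j)) * (X - C (starRingEnd ℂ (β j)))))
    (a : Fin (2*n+1) → ℝ) (ha0 : a ≠ 0)
    (ha : (M.map (Int.cast : ℤ → ℝ)).mulVec a = α • a)
    (b : Fin n → (Fin (2*n+1) → ℂ))
    (hbmem : ∀ j, b j ∈ ⨆ i, Module.End.maxGenEigenspace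
        (Matrix.mulVecLin (M.map (Int.cast : ℤ → ℂ))) (β i))
    (hbind : LinearIndependent ℂ b)
    (hbspan : Submodule.span ℂ (Set.range b)
      = ⨆ i, Module.End.maxGenEigenspace
        (Matrix.mulVecLin (M.map (Int.cast : ℤ → ℂ))) (β i))
    (R : Matrix (Fin n) (Fin n) ℂ)
    (hR : ∀ j, (M.map (Int.cast : ℤ → ℂ)).mulVec (b j) = ∑ ℓ, R ℓ j • b ℓ)
    (g₀ : Equiv.Perm (ℂ × (Fin n → ℂ)))
    (hg₀ : ∀ p : ℂ × (Fin n → ℂ), g₀ p = ((α : ℂ) * p.1, Rᵀ.mulVec p.2)) :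
    (∀ (i : Fin (2*n+1)) (p : ℂ × (Fin n → ℂ)),
        g₀ (p + inoueU n a b i) = g₀ p + ∑ j, M i j • inoueU n a b j)
      ∧ (∀ i : Fin (2*n+1),
          g₀ * Equiv.addRight (inoueU n a b i) * g₀⁻¹
            = Equiv.addRight (∑ j, M i j • inoueU n a b j))
      ∧ (∀ g ∈ Subgroup.closure
            ({g₀} ∪ Set.range fun i : Fin (2*n+1) => Equiv.addRight (inoueU n a b i)),
          ∀ h ∈ Subgroup.closure
            (Set.range fun i : Fin (2*n+1) => Equiv.addRight (inoueU n a b i)),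
          g * h * g⁻¹ ∈ Subgroup.closure
            (Set.range fun i : Fin (2*n+1) => Equiv.addRight (inoueU n a b i))) :=
  inoue_lemmaC_general n M hdet α a ha b R hR g₀ hg₀
end

section
/- The group H_M is free abelian of rank 2n+1: the map ℤ^{2n+1} → H_M sending (m₁, …, m_{2n+1}) to the translation by Σ_i m_i u_i is a group isomorphism onto H_M. -/
open Matrix Polynomial

/-!
Everything reduces to the `ℤ`-linear independence of the vectors `uᵢ`: once it holds,
`m ↦ (translation by ∑ mᵢ uᵢ)` is an injective homomorphism whose image is generated by the `gᵢ`.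
A relation `∑ mᵢ uᵢ = 0` says that the integer vector `m` is orthogonal to `a` and to every `bⱼ`,
hence, `m` being real, also to every `b̄ⱼ`. As `M` is real, `b̄ⱼ` lies in the generalized
eigenspaces of the conjugate eigenvalues. The eigenvalues of `a`, of the `bⱼ` and of the `b̄ⱼ` lie
on the real line, in the upper and in the lower half-plane respectively, so these `2n+1` vectors are
linearly independent, hence span `ℂ^{2n+1}`, and `m = 0`.
-/

section Translations

variable {ι V : Type*} [Fintype ι] [AddCommGroup V] (u : ι → V)

theorem addRight_sum_zsmul_add (m m' : ι → ℤ) :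
    Equiv.addRight (∑ i, (m + m') i • u i)
      = Equiv.addRight (∑ i, m i • u i) * Equiv.addRight (∑ i, m' i • u i) := by
  rw [← Equiv.addRight_add, add_comm]
  simp only [Pi.add_apply, add_smul, Finset.sum_add_distrib]

theorem injective_addRight_sum_zsmul (hu : LinearIndependent ℤ u) :
    Function.Injective fun m : ι → ℤ => Equiv.addRight (∑ i, m i • u i) := by
  intro m m' h
  apply linearIndependent_iff_injective_fintypeLinearCombination.mp hu
  simpa [Fintype.linearCombination_apply] using congrArg (· 0) h

theorem range_addRight_sum_zsmul :
    Set.range (fun m : ι → ℤ => Equiv.addRight (∑ i, m i • u i))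
      = (Subgroup.closure (Set.range fun i => Equiv.addRight (u i)) : Set (Equiv.Perm V)) := by
  classical
  apply Set.Subset.antisymm
  · rintro _ ⟨m, rfl⟩
    refine Finset.sum_induction _ (fun x => Equiv.addRight x ∈ Subgroup.closure _)
      (fun x y hx hy => ?_) (by simp [one_mem]) (fun i _ => ?_)
    · rw [add_comm, Equiv.addRight_add]
      exact mul_mem hx hy
    · rw [← Equiv.zsmul_addRight]
      exact zpow_mem (Subgroup.subset_closure (Set.mem_range_self i)) _
  · intro g hg
    induction hg using Subgroup.closure_induction with
    | mem _ h =>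
      obtain ⟨i, rfl⟩ := h
      exact Set.mem_range.2 ⟨Pi.single i 1, by simp [Pi.single_apply]⟩
    | one => exact ⟨0, by simp⟩
    | mul _ _ _ _ h h' =>
      obtain ⟨m, rfl⟩ := h
      obtain ⟨m', rfl⟩ := h'
      exact ⟨m + m', addRight_sum_zsmul_add u m m'⟩
    | inv _ _ h =>
      obtain ⟨m, rfl⟩ := h
      exact ⟨-m, by simp⟩

end Translations

section Conjugation

variable {R V : Type*} [CommRing R] [StarRing R] [AddCommGroup V] [Module R V]
  [StarAddMonoid V] [StarModule R V]

theorem LinearIndependent.star {ι : Type*} {v : ι → V} (hv : LinearIndependent R v) :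
    LinearIndependent R (star v) :=
  hv.map_of_injective_injectiveₛ (Star.star : R → R) (starAddEquiv : V ≃+ V).toAddMonoidHom
    star_injective starAddEquiv.injective fun r x => by simp [star_smul]

theorem star_mem_maxGenEigenspace_star {f : Module.End R V} (hf : ∀ x, f (star x) = star (f x))
    {μ : R} {x : V} (hx : x ∈ f.maxGenEigenspace μ) :
    star x ∈ f.maxGenEigenspace (star μ) := by
  obtain ⟨k, hk⟩ := (Module.End.mem_maxGenEigenspace _ _ _).mp hx
  have hsemiconj : Function.Semiconj star ⇑(f - μ • (1 : Module.End R V))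
      ⇑(f - star μ • (1 : Module.End R V)) := fun y => by
    simp [hf, star_smul]
  refine (Module.End.mem_maxGenEigenspace _ _ _).mpr ⟨k, ?_⟩
  rw [Module.End.pow_apply, ← hsemiconj.iterate_right k x, ← Module.End.pow_apply, hk, star_zero]

theorem star_mem_iSup_maxGenEigenspace_star {f : Module.End R V}
    (hf : ∀ x, f (star x) = star (f x)) {κ : Type*} {μ : κ → R} {x : V}
    (hx : x ∈ ⨆ k, f.maxGenEigenspace (μ k)) :
    star x ∈ ⨆ k, f.maxGenEigenspace (star (μ k)) := by
  refine Submodule.iSup_induction _ (motive := fun y => star y ∈ _) hx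
    (fun k y hy => Submodule.mem_iSup_of_mem k (star_mem_maxGenEigenspace_star hf hy))
    (by simp) fun y z hy hz => ?_
  simpa only [star_add] using add_mem hy hz

end Conjugation

theorem Matrix.mulVec_star_of_map_star {ι R : Type*} [Fintype ι] [CommSemiring R] [StarRing R]
    {A : Matrix ι ι R} (hA : A.map star = A) (x : ι → R) : A *ᵥ star x = star (A *ᵥ x) := by
  ext i
  nth_rw 1 [← hA]
  simp [mulVec, dotProduct, star_sum]

theorem linearIndependent_sum_elim_of_disjoint_spectra {R V : Type*} [CommRing R] [IsDomain R]
    [AddCommGroup V] [Module R V] [Module.IsTorsionFree R V] (f : Module.End R V)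
    {ι₁ ι₂ : Type*} {v₁ : ι₁ → V} {v₂ : ι₂ → V} {S T : Set R} (hST : Disjoint S T)
    (h₁ : LinearIndependent R v₁) (h₂ : LinearIndependent R v₂)
    (hv₁ : ∀ i, v₁ i ∈ ⨆ μ ∈ S, f.maxGenEigenspace μ)
    (hv₂ : ∀ j, v₂ j ∈ ⨆ μ ∈ T, f.maxGenEigenspace μ) :
    LinearIndependent R (Sum.elim v₁ v₂) :=
  h₁.sum_type h₂ <| (f.independent_maxGenEigenspace.disjoint_biSup_biSup hST).mono
    (Submodule.span_le.mpr (Set.range_subset_iff.mpr hv₁))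
    (Submodule.span_le.mpr (Set.range_subset_iff.mpr hv₂))

theorem eq_zero_of_dotProduct_eq_zero_of_span_eq_top {ι κ R : Type*} [Fintype ι]
    [CommSemiring R] {w : κ → ι → R} (hw : Submodule.span R (Set.range w) = ⊤) {v : ι → R}
    (hv : ∀ k, v ⬝ᵥ w k = 0) : v = 0 :=
  dotProduct_eq_zero v fun x =>
    LinearMap.congr_fun (LinearMap.ext_on_range hw (f := dotProductBilin R R v) (g := 0) hv) x

theorem linearIndependent_realEigenvector_sum_elim_conj {ι κ κ' : Type*} [Fintype ι]
    [DecidableEq ι] {A : Matrix ι ι ℂ} (hA : A.map star = A) {α : ℝ} {x : ι → ℂ} (hx0 : x ≠ 0)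
    (hx : A *ᵥ x = (α : ℂ) • x) {β : κ → ℂ} (hβ : ∀ k, 0 < (β k).im) {b : κ' → ι → ℂ}
    (hb : LinearIndependent ℂ b)
    (hbmem : ∀ j, b j ∈ ⨆ k, Module.End.maxGenEigenspace A.mulVecLin (β k)) :
    LinearIndependent ℂ (Sum.elim (fun _ : Unit => x) (Sum.elim b (star b))) := by
  set E := Module.End.maxGenEigenspace A.mulVecLin
  have hupper : ∀ j, b j ∈ ⨆ μ ∈ {μ : ℂ | 0 < μ.im}, E μ := fun j =>
    iSup_le (fun k => le_biSup E (hβ k)) (hbmem j)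
  have hlower : ∀ j, star b j ∈ ⨆ μ ∈ {μ : ℂ | μ.im < 0}, E μ := fun j =>
    iSup_le (fun k => le_biSup E (by simpa using hβ k))
      (star_mem_iSup_maxGenEigenspace_star (mulVec_star_of_map_star hA) (hbmem j))
  have hreal : x ∈ ⨆ μ ∈ {μ : ℂ | μ.im = 0}, E μ :=
    le_biSup E (Complex.ofReal_im α) <| Module.End.eigenspace_le_maxGenEigenspace <|
      Module.End.mem_eigenspace_iff.mpr hx
  refine linearIndependent_sum_elim_of_disjoint_spectra A.mulVecLin (T := {μ | μ.im ≠ 0}) ?_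
    (linearIndependent_unique_iff.mpr hx0)
    (linearIndependent_sum_elim_of_disjoint_spectra A.mulVecLin ?_ hb hb.star hupper hlower)
    (fun _ => hreal) ?_
  · exact Set.disjoint_left.mpr fun μ h₀ h => h h₀
  · exact Set.disjoint_left.mpr fun μ (hpos : 0 < μ.im) (hneg : μ.im < 0) =>
      lt_asymm hpos hneg
  · rintro (j | j)
    · exact biSup_mono (f := E) (fun (μ : ℂ) (h : 0 < μ.im) => h.ne') (hupper j)
    · exact biSup_mono (f := E) (fun (μ : ℂ) (h : μ.im < 0) => h.ne) (hlower j)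

theorem linearIndependent_int_inoueU {n : ℕ} {a : Fin (2*n+1) → ℝ} {b : Fin n → Fin (2*n+1) → ℂ}
    (h : LinearIndependent ℂ
      (Sum.elim (fun _ : Unit => fun i => (a i : ℂ)) (Sum.elim b (star b)))) :
    LinearIndependent ℤ (inoueU n a b) := by
  have hspan := h.span_eq_top_of_card_eq_finrank (by simp; ring)
  rw [Fintype.linearIndependent_iff]
  intro m hm
  set mC : Fin (2*n+1) → ℂ := fun i => (m i : ℂ)
  have ha : mC ⬝ᵥ (fun i => (a i : ℂ)) = 0 := by
    simpa [inoueU, dotProduct, zsmul_eq_mul, mC, Prod.fst_sum] using congrArg Prod.fst hm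
  have hb : ∀ j, mC ⬝ᵥ b j = 0 := fun j => by
    simpa [inoueU, dotProduct, zsmul_eq_mul, mC, Prod.snd_sum] using
      congrFun (congrArg Prod.snd hm) j
  have hmC : mC = 0 := by
    refine eq_zero_of_dotProduct_eq_zero_of_span_eq_top hspan ?_
    rintro (_ | j | j)
    · exact ha
    · exact hb j
    · have hstar : star mC = mC := by ext; simp [mC]
      show mC ⬝ᵥ star (b j) = 0
      rw [dotProduct_star, hstar, dotProduct_comm, hb j, star_zero]
  intro i
  simpa [mC] using congrFun hmC i

theorem inoue_HM_free_abelian_general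
    (n : ℕ)
    (M : Matrix (Fin (2*n+1)) (Fin (2*n+1)) ℤ)
    (α : ℝ)
    (β : Fin n → ℂ) (hβ : ∀ j, 0 < (β j).im)
    (a : Fin (2*n+1) → ℝ) (ha0 : a ≠ 0)
    (ha : (M.map (Int.cast : ℤ → ℝ)).mulVec a = α • a)
    (b : Fin n → (Fin (2*n+1) → ℂ))
    (hbmem : ∀ j, b j ∈ ⨆ i, Module.End.maxGenEigenspace
        (Matrix.mulVecLin (M.map (Int.cast : ℤ → ℂ))) (β i))
    (hbind : LinearIndependent ℂ b) :
    (∀ m m' : Fin (2*n+1) → ℤ,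
        Equiv.addRight (∑ i, (m + m') i • inoueU n a b i)
          = Equiv.addRight (∑ i, m i • inoueU n a b i)
            * Equiv.addRight (∑ i, m' i • inoueU n a b i))
      ∧ Function.Injective
          (fun m : Fin (2*n+1) → ℤ => Equiv.addRight (∑ i, m i • inoueU n a b i))
      ∧ Set.range (fun m : Fin (2*n+1) → ℤ => Equiv.addRight (∑ i, m i • inoueU n a b i))
          = (Subgroup.closure
              (Set.range fun i : Fin (2*n+1) => Equiv.addRight (inoueU n a b i)) :
                Subgroup (Equiv.Perm (ℂ × (Fin n → ℂ)))) := by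
  have hMreal : (M.map (Int.cast : ℤ → ℂ)).map star = M.map Int.cast := by
    ext
    simp
  have haC : M.map (Int.cast : ℤ → ℂ) *ᵥ (fun i => (a i : ℂ))
      = (α : ℂ) • fun i => (a i : ℂ) := by
    ext i
    simpa [mulVec, dotProduct] using congrArg (fun v => (v i : ℂ)) ha
  have haC0 : (fun i => (a i : ℂ)) ≠ 0 := fun h => ha0 <| funext fun i => by
    simpa using congrFun h i
  have hu : LinearIndependent ℤ (inoueU n a b) := linearIndependent_int_inoueU <|
    linearIndependent_realEigenvector_sum_elim_conj hMreal haC0 haC hβ hbind hbmem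
  exact ⟨addRight_sum_zsmul_add _, injective_addRight_sum_zsmul _ hu,
    range_addRight_sum_zsmul _⟩

/-- **(Endo–Pajitnov)**  The group `H_M` of transformations of `ℂ × ℂⁿ` generated by the
translations `gᵢ : p ↦ p + uᵢ` is free abelian of rank `2n+1`: the map
`ℤ^{2n+1} → H_M`, `(m₁, …, m_{2n+1}) ↦ (translation by ∑ᵢ mᵢ uᵢ)`, is a group
isomorphism onto `H_M`. -/
theorem inoue_HM_free_abelian
    (n : ℕ) (hn : 1 ≤ n)
    (M : Matrix (Fin (2*n+1)) (Fin (2*n+1)) ℤ) (hdet : M.det = 1)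
    (α : ℝ) (hα0 : 0 < α) (hα1 : α ≠ 1) (hαirr : Irrational α)
    (β : Fin n → ℂ) (hβ : ∀ j, 0 < (β j).im)
    (hchar : (M.map (Int.cast : ℤ → ℂ)).charpoly
      = (X - C (α : ℂ)) * ∏ j, ((X - C (β j)) * (X - C (starRingEnd ℂ (β j)))))
    (a : Fin (2*n+1) → ℝ) (ha0 : a ≠ 0)
    (ha : (M.map (Int.cast : ℤ → ℝ)).mulVec a = α • a)
    (b : Fin n → (Fin (2*n+1) → ℂ))
    (hbmem : ∀ j, b j ∈ ⨆ i, Module.End.maxGenEigenspace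
        (Matrix.mulVecLin (M.map (Int.cast : ℤ → ℂ))) (β i))
    (hbind : LinearIndependent ℂ b)
    (hbspan : Submodule.span ℂ (Set.range b)
      = ⨆ i, Module.End.maxGenEigenspace
        (Matrix.mulVecLin (M.map (Int.cast : ℤ → ℂ))) (β i)) :
    (∀ m m' : Fin (2*n+1) → ℤ,
        Equiv.addRight (∑ i, (m + m') i • inoueU n a b i)
          = Equiv.addRight (∑ i, m i • inoueU n a b i)
            * Equiv.addRight (∑ i, m' i • inoueU n a b i))
      ∧ Function.Injective
          (fun m : Fin (2*n+1) → ℤ => Equiv.addRight (∑ i, m i • inoueU n a b i))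
      ∧ Set.range (fun m : Fin (2*n+1) → ℤ => Equiv.addRight (∑ i, m i • inoueU n a b i))
          = (Subgroup.closure
              (Set.range fun i : Fin (2*n+1) => Equiv.addRight (inoueU n a b i)) :
                Subgroup (Equiv.Perm (ℂ × (Fin n → ℂ)))) :=
  inoue_HM_free_abelian_general n M α β hβ a ha0 ha b hbmem hbind
end

section
/- Let k ≥ 1 and A ∈ GL(k, ℤ). The abelianization of the semidirect product S_A is isomorphic to ℤ × (ℤ^k / (A − I)ℤ^k). -/
/-!
Every homomorphism from `M ⋊ ℤ` (the generator `t` acting by `e`) to an abelian group kills the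
commutators `t x t⁻¹ x⁻¹ = e x - x`, hence factors through `ℤ × M ⧸ (e - 1)M`; conversely
`(n, [x]) ↦ tⁿ x` is a well-defined homomorphism into the abelianization, and the two maps are
mutually inverse on generators.
-/

open Matrix

/-- The semidirect product `S_A = ℤ ⋉ ℤ^k` in which the generator `t` of `ℤ` acts on `ℤ^k`
by the automorphism `e` (in the intended situation, `e v = A v` for `A ∈ GL(k, ℤ)`). -/
def SemidirectZ (k : ℕ) (e : AddAut (Fin k → ℤ)) : Type :=
  SemidirectProduct (Multiplicative (Fin k → ℤ)) (Multiplicative ℤ)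
    (zpowersHom (MulAut (Multiplicative (Fin k → ℤ))) (AddEquiv.toMultiplicative e))

instance (k : ℕ) (e : AddAut (Fin k → ℤ)) : Group (SemidirectZ k e) :=
  inferInstanceAs (Group (SemidirectProduct _ _ _))

theorem MulAut.apply_zpow_apply_eq {N X : Type*} [Group N] {f : N → X} {σ : MulAut N}
    (h : ∀ x, f (σ x) = f x) (n : ℤ) (x : N) : f ((σ ^ n) x) = f x := by
  induction n using Int.induction_on generalizing x with
  | zero => rfl
  | succ n ih => rw [_root_.zpow_add_one, MulAut.mul_apply, ih, h]
  | pred n ih => rw [_root_.zpow_sub_one, MulAut.mul_apply, ih, ← h, MulAut.apply_inv_self]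

namespace AddAut

open SemidirectProduct

variable {M : Type*} [AddCommGroup M] (e : AddAut M)

abbrev IntSemidirect : Type _ :=
  Multiplicative M ⋊[zpowersHom _ (AddEquiv.toMultiplicative e)] Multiplicative ℤ

abbrev coinvariantsKer : AddSubgroup M := (e.toAddMonoidHom - AddMonoidHom.id M).range

abbrev Coinvariants : Type _ := M ⧸ e.coinvariantsKer

theorem mk_apply_self (x : M) : (e x : e.Coinvariants) = x :=
  QuotientAddGroup.eq.2 ⟨-x, by simp⟩

def toProdCoinvariants : e.IntSemidirect →* Multiplicative (ℤ × e.Coinvariants) :=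
  lift (AddMonoidHom.toMultiplicative ((AddMonoidHom.inr ℤ _).comp (QuotientAddGroup.mk' _)))
    (AddMonoidHom.toMultiplicative (AddMonoidHom.inl ℤ _)) fun g ↦ by
      refine MonoidHom.ext fun x ↦ ?_
      simp only [MonoidHom.coe_comp, MulEquiv.coe_toMonoidHom, Function.comp_apply,
        MulAut.conj_apply, mul_inv_cancel_comm]
      refine MulAut.apply_zpow_apply_eq (fun y ↦ ?_) _ x
      exact congrArg (fun q ↦ Multiplicative.ofAdd ((0 : ℤ), q)) (e.mk_apply_self y.toAdd)

theorem of_inl_apply_self (x : M) :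
    Abelianization.of (inl (.ofAdd (e x)) : e.IntSemidirect) = Abelianization.of (inl (.ofAdd x)) := by
  have h : (inl (.ofAdd (e x)) : e.IntSemidirect) =
      inr (.ofAdd (1 : ℤ)) * inl (.ofAdd x) * inr (.ofAdd (1 : ℤ))⁻¹ :=
    inl_aut (Multiplicative.ofAdd (1 : ℤ)) (Multiplicative.ofAdd x)
  rw [h, map_mul, map_mul, map_inv, map_inv, mul_inv_cancel_comm]

def ofProdCoinvariants : Multiplicative (ℤ × e.Coinvariants) →* Abelianization e.IntSemidirect :=
  AddMonoidHom.toMultiplicativeLeft <| AddMonoidHom.coprod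
    (MonoidHom.toAdditiveRight (Abelianization.of.comp inr))
    (QuotientAddGroup.lift _ (MonoidHom.toAdditiveRight (Abelianization.of.comp inl)) <| by
      rintro _ ⟨x, rfl⟩
      rw [AddMonoidHom.mem_ker, MonoidHom.toAdditiveRight_apply_apply, ofMul_eq_zero]
      simp only [AddEquiv.toAddMonoidHom_eq_coe, AddMonoidHom.sub_apply, AddMonoidHom.coe_coe,
        AddMonoidHom.id_apply, ofAdd_sub, MonoidHom.coe_comp, Function.comp_apply, map_div,
        of_inl_apply_self, div_self'])

theorem ofProdCoinvariants_ofAdd (n : ℤ) (x : M) :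
    e.ofProdCoinvariants (.ofAdd (n, (x : e.Coinvariants))) =
      Abelianization.of (inr (.ofAdd n)) * Abelianization.of (inl (.ofAdd x)) :=
  rfl

noncomputable def abelianizationIntSemidirectEquiv :
    Abelianization e.IntSemidirect ≃* Multiplicative (ℤ × e.Coinvariants) :=
  MonoidHom.toMulEquiv (Abelianization.lift e.toProdCoinvariants) e.ofProdCoinvariants
    (Abelianization.hom_ext _ _ <| hom_ext
      (MonoidHom.ext fun _ ↦ by simp [toProdCoinvariants, ofProdCoinvariants])
      (MonoidHom.ext fun _ ↦ by simp [toProdCoinvariants, ofProdCoinvariants]))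
    (MonoidHom.ext fun ⟨n, q⟩ ↦ by
      obtain ⟨x, rfl⟩ := QuotientAddGroup.mk_surjective q
      change Abelianization.lift e.toProdCoinvariants (e.ofProdCoinvariants (.ofAdd (n, x))) =
        .ofAdd (n, x)
      rw [ofProdCoinvariants_ofAdd, map_mul, Abelianization.lift_apply_of,
        Abelianization.lift_apply_of, toProdCoinvariants, lift_inr, lift_inl]
      simp [← ofAdd_add])

end AddAut

theorem abelianization_semidirect_general
    (k : ℕ) (A : Matrix (Fin k) (Fin k) ℤ)
    (e : AddAut (Fin k → ℤ)) (he : ∀ v, e v = A.mulVec v) :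
    Nonempty (Abelianization (SemidirectZ k e)
      ≃* Multiplicative (ℤ × ((Fin k → ℤ) ⧸ LinearMap.range (Matrix.mulVecLin (A - 1))))) := by
  have hker : (LinearMap.range (mulVecLin (A - 1))).toAddSubgroup = e.coinvariantsKer := by
    rw [LinearMap.range_toAddSubgroup]
    congr 1
    ext v
    simp [he]
  exact ⟨e.abelianizationIntSemidirectEquiv.trans <| AddEquiv.toMultiplicative <|
    (AddEquiv.refl ℤ).prodCongr (QuotientAddGroup.quotientAddEquivOfEq hker).symm⟩

/-- For `A ∈ GL(k, ℤ)`, the abelianization of the semidirect product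
`S_A = ℤ ⋉_A ℤ^k` is isomorphic to `ℤ × (ℤ^k / (A - I)ℤ^k)`. -/
theorem abelianization_semidirect
    (k : ℕ) (hk : 1 ≤ k) (A : Matrix (Fin k) (Fin k) ℤ) (hA : IsUnit A.det)
    (e : AddAut (Fin k → ℤ)) (he : ∀ v, e v = A.mulVec v) :
    Nonempty (Abelianization (SemidirectZ k e)
      ≃* Multiplicative (ℤ × ((Fin k → ℤ) ⧸ LinearMap.range (Matrix.mulVecLin (A - 1))))) :=
  abelianization_semidirect_general k A e he
end

section
/- The action of G_M on ℍ × ℂⁿ is free: if g ∈ G_M and g(p) = p for some point p ∈ ℍ × ℂⁿ, then g is the identity. -/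
/-!
Every element of `G_M` has the normal form `(w, z) ↦ (α ^ m * w + c, T ^ m z + d)` with `m ∈ ℤ`,
`c ∈ ℝ`, `d ∈ ℂⁿ` and `T z = Rᵀ z` (invertible, as `g₀` is a bijection acting on the two factors
separately), since such maps form a group containing the generators. If such a map fixes
`(w, z)`, comparing imaginary parts gives `Im w = α ^ m * Im w` with `Im w > 0`, so `α ^ m = 1`
and `m = 0` because `0 < α ≠ 1`; the map is then the translation by `(c, d)`, which has a fixed
point only when `c = 0` and `d = 0`.
-/

open Matrix Polynomial

def UpperHalf : Type := {w : ℂ // 0 < w.im}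

open Equiv Function

theorem Equiv.Perm.bijective_of_snd_apply {X Y : Type*} [Nonempty X] (σ : Perm (X × Y))
    {f : Y → Y} (hfst : ∀ x y y', (σ (x, y)).1 = (σ (x, y')).1)
    (hsnd : ∀ p, (σ p).2 = f p.2) : Bijective f := by
  obtain ⟨x⟩ := ‹Nonempty X›
  refine ⟨fun y y' h ↦ ?_, fun y ↦ ⟨(σ.symm (x, y)).2, ?_⟩⟩
  · have : σ (x, y) = σ (x, y') := Prod.ext (hfst x y y') (by rw [hsnd, hsnd, h])
    exact congrArg Prod.snd (σ.injective this)
  · rw [← hsnd, σ.apply_symm_apply]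

section InoueAffine

variable {E : Type*} [AddCommGroup E] [Module ℂ E] {α : ℝ} {T : E ≃ₗ[ℂ] E}

def IsInoueAffine (α : ℝ) (T : E ≃ₗ[ℂ] E) (γ : Perm (UpperHalf × E)) : Prop :=
  ∃ (m : ℤ) (c : ℝ) (d : E), ∀ p,
    (γ p).1.val = ↑(α ^ m) * p.1.val + c ∧ (γ p).2 = (T ^ m) p.2 + d

theorem isInoueAffine_one : IsInoueAffine α T 1 :=
  ⟨0, 0, 0, fun p ↦ by simp⟩

theorem IsInoueAffine.mul {γ δ : Perm (UpperHalf × E)} (hγ : IsInoueAffine α T γ)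
    (hδ : IsInoueAffine α T δ) (hα : α ≠ 0) : IsInoueAffine α T (γ * δ) := by
  obtain ⟨m, c, d, hγ⟩ := hγ
  obtain ⟨m', c', d', hδ⟩ := hδ
  refine ⟨m + m', α ^ m * c' + c, (T ^ m) d' + d, fun p ↦ ⟨?_, ?_⟩⟩
  · rw [Perm.mul_apply, (hγ _).1, (hδ p).1]
    push_cast [zpow_add₀ hα]
    ring
  · rw [Perm.mul_apply, (hγ _).2, (hδ p).2, map_add, _root_.zpow_add, LinearEquiv.mul_apply,
      add_assoc]

theorem IsInoueAffine.inv {γ : Perm (UpperHalf × E)} (hγ : IsInoueAffine α T γ)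
    (hα : α ≠ 0) : IsInoueAffine α T γ⁻¹ := by
  obtain ⟨m, c, d, hγ⟩ := hγ
  refine ⟨-m, -(α ^ (-m) * c), -(T ^ (-m)) d, fun p ↦ ?_⟩
  obtain ⟨h₁, h₂⟩ := hγ (γ⁻¹ p)
  rw [← Perm.mul_apply, mul_inv_cancel, Perm.one_apply] at h₁ h₂
  constructor
  · rw [h₁]
    have : (α : ℂ) ^ m ≠ 0 := zpow_ne_zero m (Complex.ofReal_ne_zero.2 hα)
    push_cast [_root_.zpow_neg]
    field_simp
    ring
  · rw [h₂, map_add, ← LinearEquiv.mul_apply, ← _root_.zpow_add, neg_add_cancel, zpow_zero]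
    simp

def inoueAffineSubgroup (hα : α ≠ 0) (T : E ≃ₗ[ℂ] E) : Subgroup (Perm (UpperHalf × E)) where
  carrier := {γ | IsInoueAffine α T γ}
  one_mem' := isInoueAffine_one
  mul_mem' hγ hδ := hγ.mul hδ hα
  inv_mem' hγ := hγ.inv hα

theorem IsInoueAffine.eq_one_of_apply_eq {γ : Perm (UpperHalf × E)} (hγ : IsInoueAffine α T γ)
    (hα₀ : 0 < α) (hα₁ : α ≠ 1) {p : UpperHalf × E} (hp : γ p = p) : γ = 1 := by
  obtain ⟨m, c, d, hγ⟩ := hγ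
  obtain ⟨h₁, h₂⟩ := hγ p
  rw [hp] at h₁ h₂
  have hm : m = 0 := by
    have him : α ^ m * p.1.val.im = p.1.val.im := by
      simpa only [Complex.add_im, Complex.im_ofReal_mul, Complex.ofReal_im, add_zero]
        using (congrArg Complex.im h₁).symm
    refine zpow_right_injective₀ hα₀ hα₁ ?_
    simpa using (mul_eq_right₀ p.1.property.ne').1 him
  subst hm
  have hc : c = 0 := by simpa using h₁
  have hd : d = 0 := by simpa using h₂
  subst hc hd
  ext1 q
  obtain ⟨h₁, h₂⟩ := hγ q
  exact Prod.ext (Subtype.ext (by simpa using h₁)) (by simpa using h₂)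

end InoueAffine

theorem inoue_action_free_general
    (n : ℕ)
    (α : ℝ) (hα0 : 0 < α) (hα1 : α ≠ 1)
    (a : Fin (2*n+1) → ℝ)
    (b : Fin n → (Fin (2*n+1) → ℂ))
    (R : Matrix (Fin n) (Fin n) ℂ)
    (g₀ : Equiv.Perm (UpperHalf × (Fin n → ℂ)))
    (hg₀ : ∀ p : UpperHalf × (Fin n → ℂ),
      ((g₀ p).1.val = (α : ℂ) * p.1.val) ∧ (g₀ p).2 = Rᵀ.mulVec p.2)
    (g : Fin (2*n+1) → Equiv.Perm (UpperHalf × (Fin n → ℂ)))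
    (hg : ∀ (i : Fin (2*n+1)) (p : UpperHalf × (Fin n → ℂ)),
      ((g i p).1.val = p.1.val + (a i : ℂ))
        ∧ (g i p).2 = p.2 + fun j => b j i) :
    ∀ γ ∈ Subgroup.closure ({g₀} ∪ Set.range g),
      (∃ p : UpperHalf × (Fin n → ℂ), γ p = p) → γ = 1 := by
  have : Nonempty UpperHalf := ⟨⟨Complex.I, by simp⟩⟩
  have hR : Bijective Rᵀ.mulVecLin := g₀.bijective_of_snd_apply
    (fun x y y' ↦ Subtype.ext <| by rw [(hg₀ _).1, (hg₀ _).1]) (fun p ↦ (hg₀ p).2)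
  set T := LinearEquiv.ofBijective _ hR
  have hG : Subgroup.closure ({g₀} ∪ Set.range g) ≤ inoueAffineSubgroup hα0.ne' T := by
    rw [Subgroup.closure_le, Set.union_subset_iff, Set.singleton_subset_iff]
    refine ⟨⟨1, 0, 0, fun p ↦ ?_⟩,
      Set.range_subset_iff.2 fun i ↦ ⟨0, a i, fun j ↦ b j i, fun p ↦ ?_⟩⟩
    · simp only [hg₀ p, T, LinearEquiv.ofBijective_apply, Matrix.mulVecLin_apply, zpow_one,
        Complex.ofReal_zero, add_zero, true_and]
    · simp [hg i p]
  rintro γ hγ ⟨p, hp⟩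
  exact (hG hγ).eq_one_of_apply_eq hα0 hα1 hp

/-- **Proposition G, first part** (Endo–Pajitnov).  The action of the group `G_M` of
transformations of `ℍ × ℂⁿ` generated by `g₀(w, z) = (α w, Rᵀ z)` and the translations
`gᵢ : p ↦ p + uᵢ` is free: if `g ∈ G_M` fixes some point, then `g` is the identity. -/
theorem inoue_action_free
    (n : ℕ) (hn : 1 ≤ n)
    (M : Matrix (Fin (2*n+1)) (Fin (2*n+1)) ℤ) (hdet : M.det = 1)
    (α : ℝ) (hα0 : 0 < α) (hα1 : α ≠ 1) (hαirr : Irrational α)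
    (β : Fin n → ℂ) (hβ : ∀ j, 0 < (β j).im)
    (hchar : (M.map (Int.cast : ℤ → ℂ)).charpoly
      = (X - C (α : ℂ)) * ∏ j, ((X - C (β j)) * (X - C (starRingEnd ℂ (β j)))))
    (a : Fin (2*n+1) → ℝ) (ha0 : a ≠ 0)
    (ha : (M.map (Int.cast : ℤ → ℝ)).mulVec a = α • a)
    (b : Fin n → (Fin (2*n+1) → ℂ))
    (hbmem : ∀ j, b j ∈ ⨆ i, Module.End.maxGenEigenspace
        (Matrix.mulVecLin (M.map (Int.cast : ℤ → ℂ))) (β i))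
    (hbind : LinearIndependent ℂ b)
    (hbspan : Submodule.span ℂ (Set.range b)
      = ⨆ i, Module.End.maxGenEigenspace
        (Matrix.mulVecLin (M.map (Int.cast : ℤ → ℂ))) (β i))
    (R : Matrix (Fin n) (Fin n) ℂ)
    (hR : ∀ j, (M.map (Int.cast : ℤ → ℂ)).mulVec (b j) = ∑ ℓ, R ℓ j • b ℓ)
    (g₀ : Equiv.Perm (UpperHalf × (Fin n → ℂ)))
    (hg₀ : ∀ p : UpperHalf × (Fin n → ℂ),
      ((g₀ p).1.val = (α : ℂ) * p.1.val) ∧ (g₀ p).2 = Rᵀ.mulVec p.2)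
    (g : Fin (2*n+1) → Equiv.Perm (UpperHalf × (Fin n → ℂ)))
    (hg : ∀ (i : Fin (2*n+1)) (p : UpperHalf × (Fin n → ℂ)),
      ((g i p).1.val = p.1.val + (a i : ℂ))
        ∧ (g i p).2 = p.2 + fun j => b j i) :
    ∀ γ ∈ Subgroup.closure ({g₀} ∪ Set.range g),
      (∃ p : UpperHalf × (Fin n → ℂ), γ p = p) → γ = 1 :=
  inoue_action_free_general n α hα0 hα1 a b R g₀ hg₀ g hg
end

section
/- Let k ≥ 1 and let A, B ∈ SL(k, ℤ) be such that 1 is not an eigenvalue of A nor of B (equivalently det(A − I) ≠ 0 and det(B − I) ≠ 0). If the groups S_A and S_B are isomorphic, then there exists an integer matrix C invertible over ℤ (C ∈ GL(k, ℤ)) such that C A C^{-1} = B or C A C^{-1} = B^{-1}. -/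
open Matrix

/-!
In `S_e = V ⋊_e ℤ` the commutator `⁅t, w⁆` is `e w - w`. When every `v ∈ V` has a nonzero multiple
in `(e - 1) V` (for `e = A` on `ℤ^k` take `w = adj (A - 1) v`), the subgroup `V` is therefore
intrinsic: since the quotient `ℤ` is abelian and torsion-free, `V` consists exactly of the elements
with a nonzero power in the commutator subgroup. So an isomorphism `S_A ≃* S_B` restricts to an
automorphism `C` of `ℤ^k` and induces an automorphism of the quotient `ℤ`, i.e. sends `t` to
`v t^{±1}`; transporting `t w t⁻¹ = A w` along it gives `C A = B^{±1} C`.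
-/

open SemidirectProduct Multiplicative
open scoped commutatorElement

theorem SemidirectProduct.mul_inl_mul_inv {N G : Type*} [CommGroup N] [Group G]
    {φ : G →* MulAut N} (g : N ⋊[φ] G) (n : N) : g * inl n * g⁻¹ = inl (φ g.right n) := by
  ext <;> simp [mul_left, mul_right, inv_left, inv_right]

namespace MulEquiv

variable {G H N M : Type*} [Group G] [Group H] [Group N] [Group M]

theorem map_mem_commutator_iff (ψ : G ≃* H) {g : G} :
    ψ g ∈ commutator H ↔ g ∈ commutator G := by
  have h : (commutator G).map (ψ : G →* H) = commutator H := by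
    rw [commutator_def, commutator_def, Subgroup.map_commutator,
      Subgroup.map_top_of_surjective _ ψ.surjective]
  rw [← h]
  exact Subgroup.mem_map_iff_mem (f := (ψ : G →* H)) ψ.injective

noncomputable def ofMapRangeEq (ψ : G ≃* H) {i : N →* G} {j : M →* H}
    (hi : Function.Injective i) (hj : Function.Injective j)
    (h : i.range.map (ψ : G →* H) = j.range) : N ≃* M :=
  (MonoidHom.ofInjective hi).trans <|
    (ψ.subgroupMap _).trans <| (subgroupCongr h).trans (MonoidHom.ofInjective hj).symm

theorem apply_ofMapRangeEq (ψ : G ≃* H) {i : N →* G} {j : M →* H}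
    (hi : Function.Injective i) (hj : Function.Injective j)
    (h : i.range.map (ψ : G →* H) = j.range) (n : N) :
    j (ψ.ofMapRangeEq hi hj h n) = ψ (i n) := by
  simp [ofMapRangeEq, MonoidHom.apply_ofInjective_symm, MonoidHom.ofInjective_apply]

end MulEquiv

section

variable {V W : Type*} [AddCommGroup V] [AddCommGroup W]

abbrev ZSemidirect (e : AddAut V) : Type _ :=
  Multiplicative V ⋊[zpowersHom _ (AddEquiv.toMultiplicative e)] Multiplicative ℤ

def HasTorsionCoinvariants (e : AddAut V) : Prop :=
  ∀ v : V, ∃ n : ℤ, n ≠ 0 ∧ ∃ w, e w - w = n • v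

namespace ZSemidirect

variable (e : AddAut V)

theorem inl_apply_eq_conj (v : V) :
    (inl (ofAdd (e v)) : ZSemidirect e) =
      inr (ofAdd 1) * inl (ofAdd v) * (inr (ofAdd 1) : ZSemidirect e)⁻¹ := by
  rw [mul_inl_mul_inv]
  simp

theorem commutatorElement_inr_inl (w : V) :
    ⁅(inr (ofAdd 1) : ZSemidirect e), (inl (ofAdd w) : ZSemidirect e)⁆ =
      inl (ofAdd (e w - w)) := by
  rw [commutatorElement_def, ← inl_apply_eq_conj, ← map_inv (inl : _ →* ZSemidirect e),
    ← map_mul, sub_eq_add_neg]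
  rfl

variable {e} {f : AddAut W}

theorem mem_ker_rightHom_iff (he : HasTorsionCoinvariants e) (g : ZSemidirect e) :
    g ∈ (rightHom : ZSemidirect e →* _).ker ↔
      ∃ n : ℤ, n ≠ 0 ∧ g ^ n ∈ commutator (ZSemidirect e) := by
  constructor
  · rw [← range_inl_eq_ker_rightHom]
    rintro ⟨x, rfl⟩
    obtain ⟨n, hn, w, hw⟩ := he x.toAdd
    refine ⟨n, hn, ?_⟩
    rw [← map_zpow, ← ofAdd_toAdd (x ^ n), toAdd_zpow, ← hw, ← commutatorElement_inr_inl]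
    exact Subgroup.commutator_mem_commutator (Subgroup.mem_top _) (Subgroup.mem_top _)
  · rintro ⟨n, hn, hg⟩
    have hgn := Abelianization.commutator_subset_ker rightHom hg
    rw [MonoidHom.mem_ker, map_zpow, ← toAdd_eq_zero, toAdd_zpow, smul_eq_zero] at hgn
    rw [MonoidHom.mem_ker, ← toAdd_eq_zero]
    exact hgn.resolve_left hn

theorem map_mem_ker_rightHom_iff (he : HasTorsionCoinvariants e)
    (hf : HasTorsionCoinvariants f) (ψ : ZSemidirect e ≃* ZSemidirect f) (g : ZSemidirect e) :
    ψ g ∈ (rightHom : ZSemidirect f →* _).ker ↔ g ∈ (rightHom : ZSemidirect e →* _).ker := by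
  simp_rw [mem_ker_rightHom_iff he, mem_ker_rightHom_iff hf, ← map_zpow,
    ψ.map_mem_commutator_iff]

theorem map_range_inl (he : HasTorsionCoinvariants e)
    (hf : HasTorsionCoinvariants f) (ψ : ZSemidirect e ≃* ZSemidirect f) :
    (inl : _ →* ZSemidirect e).range.map (ψ : ZSemidirect e →* ZSemidirect f) =
      (inl : _ →* ZSemidirect f).range := by
  ext x
  rw [range_inl_eq_ker_rightHom, range_inl_eq_ker_rightHom, Subgroup.map_equiv_eq_comap_symm,
    Subgroup.mem_comap, MonoidHom.coe_coe, ← map_mem_ker_rightHom_iff he hf ψ,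
    MulEquiv.apply_symm_apply]

theorem rightHom_map_inr_one (ψ : ZSemidirect e ≃* ZSemidirect f)
    (hψ : ∀ x, rightHom (ψ (inl x)) = 1) :
    (rightHom (ψ (inr (ofAdd 1)))).toAdd = 1 ∨ (rightHom (ψ (inr (ofAdd 1)))).toAdd = -1 := by
  -- `ψ⁻¹ t = x t^m` with `x ∈ V`; applying `ψ` and projecting to `ℤ` gives `1 = m ε`.
  set g := ψ.symm (inr (ofAdd 1))
  have hpow : (inr g.right : ZSemidirect e) = inr (ofAdd 1) ^ g.right.toAdd := by
    rw [← map_zpow, ← ofAdd_zsmul, smul_eq_mul, mul_one, ofAdd_toAdd]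
  have h : ofAdd 1 = rightHom (ψ (inr (ofAdd 1))) ^ g.right.toAdd := by
    rw [← map_zpow, ← map_zpow, ← hpow, ← one_mul (rightHom (ψ _)), ← hψ g.left, ← map_mul,
      ← map_mul, inl_left_mul_inr_right, MulEquiv.apply_symm_apply, rightHom_inr]
  rw [← toAdd.injective.eq_iff, toAdd_zpow, toAdd_ofAdd, smul_eq_mul, mul_comm] at h
  exact Int.eq_one_or_neg_one_of_mul_eq_one h.symm

theorem exists_addEquiv_conj (he : HasTorsionCoinvariants e)
    (hf : HasTorsionCoinvariants f) (ψ : ZSemidirect e ≃* ZSemidirect f) :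
    ∃ c : V ≃+ W, (∀ v, c (e v) = f (c v)) ∨ ∀ v, c (e v) = f.symm (c v) := by
  set χ := ψ.ofMapRangeEq inl_injective inl_injective (map_range_inl he hf ψ)
  have hχ : ∀ x, ψ (inl x) = inl (χ x) := fun x => (ψ.apply_ofMapRangeEq _ _ _ x).symm
  have hconj : ∀ v, χ (ofAdd (e v)) = zpowersHom _ (AddEquiv.toMultiplicative f)
      (rightHom (ψ (inr (ofAdd 1)))) (χ (ofAdd v)) := by
    intro v
    apply inl_injective (φ := zpowersHom _ (AddEquiv.toMultiplicative f)) (G := Multiplicative ℤ)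
    rw [← hχ, inl_apply_eq_conj, map_mul, map_mul, map_inv, hχ, mul_inl_mul_inv]
    rfl
  refine ⟨AddEquiv.toMultiplicative.symm χ, ?_⟩
  rcases rightHom_map_inr_one ψ (fun x => by rw [hχ, rightHom_inl]) with h | h
  all_goals simp only [zpowersHom_apply, h] at hconj
  · exact .inl fun v => by simpa using congrArg toAdd (hconj v)
  · exact .inr fun v => by simpa using congrArg toAdd (hconj v)

end ZSemidirect

end

section LinearEquiv

variable {n R : Type*} [Fintype n] [DecidableEq n] [CommRing R]

theorem Matrix.isUnit_det_of_linearEquiv_apply (e : (n → R) ≃ₗ[R] (n → R)) {M : Matrix n n R}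
    (he : ∀ v, e v = M *ᵥ v) : IsUnit M.det := by
  have hM : M = LinearMap.toMatrix' (e : (n → R) →ₗ[R] (n → R)) := by
    rw [← LinearMap.toMatrix'_toLin' M]
    congr 1
    ext v
    simp [he]
  rw [hM, LinearMap.det_toMatrix']
  exact e.isUnit_det'

theorem LinearEquiv.exists_isUnit_det_apply_eq_mulVec (e : (n → R) ≃ₗ[R] (n → R)) :
    ∃ M : Matrix n n R, IsUnit M.det ∧ ∀ v, e v = M *ᵥ v :=
  have he : ∀ v, e v = LinearMap.toMatrix' (e : (n → R) →ₗ[R] (n → R)) *ᵥ v :=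
    fun v => (LinearMap.toMatrix'_mulVec _ v).symm
  ⟨_, isUnit_det_of_linearEquiv_apply e he, he⟩

theorem LinearEquiv.symm_apply_eq_inv_mulVec (e : (n → R) ≃ₗ[R] (n → R)) {M : Matrix n n R}
    (he : ∀ v, e v = M *ᵥ v) (v : n → R) : e.symm v = M⁻¹ *ᵥ v := by
  apply e.injective
  rw [apply_symm_apply, he, mulVec_mulVec,
    mul_nonsing_inv _ (isUnit_det_of_linearEquiv_apply e he), one_mulVec]

end LinearEquiv

theorem hasTorsionCoinvariants_of_det_sub_one_ne_zero {n : Type*} [Fintype n]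
    [DecidableEq n] (e : AddAut (n → ℤ)) {M : Matrix n n ℤ} (he : ∀ v, e v = M *ᵥ v)
    (hM : (M - 1).det ≠ 0) :
    HasTorsionCoinvariants e := fun v =>
  ⟨(M - 1).det, hM, (M - 1).adjugate *ᵥ v, by
    have h := mulVec_mulVec v (M - 1) (M - 1).adjugate
    rwa [mul_adjugate, smul_mulVec, one_mulVec, sub_mulVec, one_mulVec, ← he] at h⟩

theorem conjugate_of_semidirect_iso_general
    (k : ℕ)
    (A B : Matrix (Fin k) (Fin k) ℤ)
    (hA1 : (A - 1).det ≠ 0) (hB1 : (B - 1).det ≠ 0)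
    (eA : AddAut (Fin k → ℤ)) (heA : ∀ v, eA v = A.mulVec v)
    (eB : AddAut (Fin k → ℤ)) (heB : ∀ v, eB v = B.mulVec v)
    (hiso : Nonempty (SemidirectZ k eA ≃* SemidirectZ k eB)) :
    ∃ C : Matrix (Fin k) (Fin k) ℤ, IsUnit C.det ∧
      (C * A = B * C ∨ C * A = B⁻¹ * C) := by
  obtain ⟨ψ⟩ := hiso
  obtain ⟨c, hc⟩ := ZSemidirect.exists_addEquiv_conj
    (hasTorsionCoinvariants_of_det_sub_one_ne_zero eA heA hA1)
    (hasTorsionCoinvariants_of_det_sub_one_ne_zero eB heB hB1)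
    (ψ : ZSemidirect eA ≃* ZSemidirect eB)
  obtain ⟨C, hCdet, hC⟩ := c.toIntLinearEquiv.exists_isUnit_det_apply_eq_mulVec
  have hBinv := eB.toIntLinearEquiv.symm_apply_eq_inv_mulVec heB
  refine ⟨C, hCdet, hc.imp (fun h => ext_iff_mulVec.2 fun v => ?_)
    (fun h => ext_iff_mulVec.2 fun v => ?_)⟩
  · simpa [← mulVec_mulVec, ← heA, ← heB, ← hC] using h v
  · simpa [← mulVec_mulVec, ← heA, ← hBinv, ← hC] using h v

/-- **Theorem (Endo–Pajitnov)**.  Let `A, B ∈ SL(k, ℤ)` such that `1` is not an eigenvalue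
of `A` nor of `B` (equivalently, `det (A - I) ≠ 0` and `det (B - I) ≠ 0`).  If the groups
`S_A` and `S_B` are isomorphic, then `A` is conjugate to `B` or to `B⁻¹` in `GL(k, ℤ)`:
there is an integer matrix `C`, invertible over `ℤ`, with `C A C⁻¹ = B` or `C A C⁻¹ = B⁻¹`. -/
theorem conjugate_of_semidirect_iso
    (k : ℕ) (hk : 1 ≤ k)
    (A B : Matrix (Fin k) (Fin k) ℤ) (hA : A.det = 1) (hB : B.det = 1)
    (hA1 : (A - 1).det ≠ 0) (hB1 : (B - 1).det ≠ 0)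
    (eA : AddAut (Fin k → ℤ)) (heA : ∀ v, eA v = A.mulVec v)
    (eB : AddAut (Fin k → ℤ)) (heB : ∀ v, eB v = B.mulVec v)
    (hiso : Nonempty (SemidirectZ k eA ≃* SemidirectZ k eB)) :
    ∃ C : Matrix (Fin k) (Fin k) ℤ, IsUnit C.det ∧
      (C * A = B * C ∨ C * A = B⁻¹ * C) :=
  conjugate_of_semidirect_iso_general k A B hA1 hB1 eA heA eB heB hiso
end

section
/- Let k ≥ 1 and let A, B ∈ SL(k, ℤ) be such that 1 is not an eigenvalue of A nor of B. If S_A and S_B are isomorphic groups and A is diagonalizable over ℂ, then B is diagonalizable over ℂ. -/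
/-!
An isomorphism `S_A ≅ S_B` must map `ℤ^k` onto `ℤ^k`: since `det (A - 1) ≠ 0`, the group
`ℤ^k / (A - 1) ℤ^k` is finite, so every homomorphism `S_A → ℤ` kills `ℤ^k`. The isomorphism thus
restricts to an automorphism `P` of `ℤ^k` and induces an automorphism `t ↦ t^{±1}` of the
quotient `ℤ`; comparing the conjugation actions of `t` on both sides gives `P A P⁻¹ = B^{±1}`.
Hence `B` is conjugate in `GL(k, ℂ)` to `A` or to `A⁻¹`, and diagonalizability survives both.
-/

open Matrix

/-- A square complex matrix is diagonalizable if it is similar to a diagonal matrix. -/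
def Matrix.Diagonalizable {k : ℕ} (A : Matrix (Fin k) (Fin k) ℂ) : Prop :=
  ∃ P D : Matrix (Fin k) (Fin k) ℂ, IsUnit P.det ∧ D.IsDiag ∧ A = P⁻¹ * D * P

open Multiplicative

theorem MonoidHom.isUnit_toAdd_apply_ofAdd_one {θ : Multiplicative ℤ →* Multiplicative ℤ}
    (hθ : Function.Surjective θ) : IsUnit (θ (ofAdd 1)).toAdd := by
  obtain ⟨n, hn⟩ := hθ (ofAdd 1)
  have hpow : θ n = θ (ofAdd 1) ^ n.toAdd := by
    rw [← map_zpow, ← ofAdd_zsmul, smul_eq_mul, mul_one, ofAdd_toAdd]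
  rw [hpow] at hn
  apply IsUnit.of_mul_eq_one n.toAdd
  simpa [mul_comm] using congrArg toAdd hn

namespace SemidirectProduct

variable {N N' G G' : Type*} [Group G] [Group G']

theorem conj_inl [CommGroup N] {φ : G →* MulAut N} (x : N ⋊[φ] G) (n : N) :
    x * inl n * x⁻¹ = inl (φ x.right n) := by
  ext
  · simp only [mul_left, inv_left, left_inl, right_inl, mul_right, mul_one]
    rw [← MulAut.mul_apply, ← map_mul, mul_inv_cancel, map_one, MulAut.one_apply,
      mul_right_comm, mul_inv_cancel, one_mul]
  · simp

theorem map_inl_eq_one {M : Type*} [CommGroup N] [CommGroup M] [IsMulTorsionFree M]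
    {φ : G →* MulAut N} (f : N ⋊[φ] G →* M) {n a : N} {g : G} {m : ℤ} (hm : m ≠ 0)
    (h : n ^ m = φ g a / a) : f (inl n) = 1 := by
  have hinv : f (inl (φ g a)) = f (inl a) := by
    rw [inl_aut, map_mul, map_mul, map_inv, map_inv, mul_right_comm, mul_inv_cancel, one_mul]
  rw [← IsMulTorsionFree.zpow_eq_one_iff_left hm, ← map_zpow, ← map_zpow, h, map_div, map_div,
    hinv, div_self']

theorem inl_left_of_right_eq_one [Group N] {φ : G →* MulAut N} {x : N ⋊[φ] G}
    (hx : x.right = 1) : inl x.left = x := by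
  rw [← inl_left_mul_inr_right x, hx, map_one, mul_one, left_inl]

theorem exists_mulEquiv_apply_inl [Group N] [Group N'] {φ : G →* MulAut N}
    {φ' : G' →* MulAut N'} (Φ : N ⋊[φ] G ≃* N' ⋊[φ'] G') (h : ∀ n, (Φ (inl n)).right = 1)
    (h' : ∀ n, (Φ.symm (inl n)).right = 1) : ∃ ψ : N ≃* N', ∀ n, Φ (inl n) = inl (ψ n) := by
  refine ⟨{ toFun n := (Φ (inl n)).left
            invFun n := (Φ.symm (inl n)).left
            left_inv n := ?_
            right_inv n := ?_
            map_mul' a b := ?_ }, fun n => (inl_left_of_right_eq_one (h n)).symm⟩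
  · dsimp only
    rw [inl_left_of_right_eq_one (h n), MulEquiv.symm_apply_apply, left_inl]
  · dsimp only
    rw [inl_left_of_right_eq_one (h' n), MulEquiv.apply_symm_apply, left_inl]
  · simp only [map_mul, mul_left, h, map_one, MulAut.one_apply]

theorem apply_aut_eq_aut_right_apply_inr [Group N] [CommGroup N'] {φ : G →* MulAut N}
    {φ' : G' →* MulAut N'} (Φ : N ⋊[φ] G ≃* N' ⋊[φ'] G') (ψ : N →* N')
    (hψ : ∀ n, Φ (inl n) = inl (ψ n)) (g : G) (n : N) :
    ψ (φ g n) = φ' (Φ (inr g)).right (ψ n) := by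
  apply inl_injective (φ := φ')
  rw [← hψ, ← conj_inl, ← hψ, inl_aut, map_mul, map_mul, map_inv, map_inv]

theorem isUnit_toAdd_right_apply_inr [Group N] [Group N'] {φ : Multiplicative ℤ →* MulAut N}
    {φ' : Multiplicative ℤ →* MulAut N'}
    (Φ : N ⋊[φ] Multiplicative ℤ ≃* N' ⋊[φ'] Multiplicative ℤ)
    (h : ∀ n, (Φ (inl n)).right = 1) : IsUnit (Φ (inr (ofAdd 1))).right.toAdd := by
  apply (rightHom.comp (Φ.toMonoidHom.comp inr)).isUnit_toAdd_apply_ofAdd_one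
  intro y
  refine ⟨(Φ.symm (inr y)).right, ?_⟩
  conv_rhs => rw [← right_inr (φ := φ') y, ← Φ.apply_symm_apply (inr y),
    ← inl_left_mul_inr_right (Φ.symm (inr y)), map_mul, mul_right, h, one_mul]
  rfl

theorem exists_isConj_of_mulEquiv [CommGroup N] {φ φ' : Multiplicative ℤ →* MulAut N}
    (Φ : N ⋊[φ] Multiplicative ℤ ≃* N ⋊[φ'] Multiplicative ℤ)
    (hφ : ∀ f : N ⋊[φ] Multiplicative ℤ →* Multiplicative ℤ, ∀ n, f (inl n) = 1)
    (hφ' : ∀ f : N ⋊[φ'] Multiplicative ℤ →* Multiplicative ℤ, ∀ n, f (inl n) = 1) :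
    ∃ u : ℤˣ, IsConj (φ (ofAdd 1)) (φ' (ofAdd u)) := by
  have h n := hφ (rightHom.comp Φ.toMonoidHom) n
  have h' n := hφ' (rightHom.comp Φ.symm.toMonoidHom) n
  obtain ⟨ψ, hψ⟩ := exists_mulEquiv_apply_inl Φ h h'
  obtain ⟨u, hu⟩ := isUnit_toAdd_right_apply_inr Φ h
  refine ⟨u, isConj_iff.mpr ⟨ψ, MulEquiv.ext fun n => ?_⟩⟩
  have := apply_aut_eq_aut_right_apply_inr Φ ψ.toMonoidHom hψ (ofAdd 1) (ψ.symm n)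
  rw [hu]
  simpa using this

end SemidirectProduct

-- `(A - 1) * adjugate (A - 1) = det (A - 1) • 1` makes `ℤ^k / (A - 1) ℤ^k` a torsion group.
theorem SemidirectZ.map_inl_eq_one {k : ℕ} {A : Matrix (Fin k) (Fin k) ℤ}
    (hA1 : (A - 1).det ≠ 0) {e : AddAut (Fin k → ℤ)} (he : ∀ v, e v = A *ᵥ v)
    (f : SemidirectZ k e →* Multiplicative ℤ) (n : Multiplicative (Fin k → ℤ)) :
    f (SemidirectProduct.inl n) = 1 := by
  refine SemidirectProduct.map_inl_eq_one f (g := ofAdd 1)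
    (a := ofAdd ((A - 1).adjugate *ᵥ n.toAdd)) hA1 ?_
  apply toAdd.injective
  have hw : (A - 1) *ᵥ ((A - 1).adjugate *ᵥ n.toAdd) = (A - 1).det • n.toAdd := by
    rw [mulVec_mulVec, mul_adjugate, smul_mulVec, one_mulVec]
  rw [toAdd_zpow, ← hw, sub_mulVec, one_mulVec, ← he]
  rfl

noncomputable def MulAut.toGL (k : ℕ) : MulAut (Multiplicative (Fin k → ℤ)) →* GL (Fin k) ℂ :=
  MonoidHom.toHomUnits <|
    (Int.castRingHom ℂ).mapMatrix.toMonoidHom.comp <|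
      (LinearMap.toMatrixAlgEquiv' : Module.End ℤ (Fin k → ℤ) ≃ₐ[ℤ] _).toMonoidHom.comp
        { toFun σ := (AddEquiv.toMultiplicative.symm σ).toAddMonoidHom.toIntLinearMap
          map_one' := rfl
          map_mul' _ _ := rfl }

theorem MulAut.coe_toGL_toMultiplicative {k : ℕ} {A : Matrix (Fin k) (Fin k) ℤ}
    {e : AddAut (Fin k → ℤ)} (he : ∀ v, e v = A *ᵥ v) :
    (MulAut.toGL k (AddEquiv.toMultiplicative e) : Matrix (Fin k) (Fin k) ℂ) = A.map (↑) := by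
  have hlin : e.toAddMonoidHom.toIntLinearMap = Matrix.toLin' A := LinearMap.ext he
  change (LinearMap.toMatrix' e.toAddMonoidHom.toIntLinearMap).map (Int.cast : ℤ → ℂ) = _
  rw [hlin, LinearMap.toMatrix'_toLin']

namespace Matrix.Diagonalizable

variable {k : ℕ}

theorem of_isConj {U V : GL (Fin k) ℂ} (hU : (U : Matrix (Fin k) (Fin k) ℂ).Diagonalizable)
    (hUV : IsConj U V) : (V : Matrix (Fin k) (Fin k) ℂ).Diagonalizable := by
  obtain ⟨P, D, hP, hD, hPD⟩ := hU
  obtain ⟨c, rfl⟩ := isConj_iff.mp hUV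
  have hc : IsUnit (c : Matrix (Fin k) (Fin k) ℂ).det := isUnits_det_units _
  refine ⟨P * ((c⁻¹ : GL (Fin k) ℂ) : Matrix (Fin k) (Fin k) ℂ), D, ?_, hD, ?_⟩
  · rw [det_mul]
    exact hP.mul (isUnits_det_units _)
  · rw [Units.val_mul, Units.val_mul, hPD, mul_inv_rev, coe_units_inv,
      nonsing_inv_nonsing_inv _ hc]
    simp only [mul_assoc]

theorem inv {U : GL (Fin k) ℂ} (hU : (U : Matrix (Fin k) (Fin k) ℂ).Diagonalizable) :
    ((U⁻¹ : GL (Fin k) ℂ) : Matrix (Fin k) (Fin k) ℂ).Diagonalizable := by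
  obtain ⟨P, D, hP, hD, hPD⟩ := hU
  have hD_det : IsUnit D.det := by
    rw [← det_conj' ((isUnit_iff_isUnit_det P).mpr hP), ← hPD]
    exact isUnits_det_units U
  refine ⟨P, D⁻¹, hP, ?_, ?_⟩
  · rw [← hD.diagonal_diag, inv_diagonal]
    exact isDiag_diagonal _
  · rw [coe_units_inv, hPD, mul_inv_rev, mul_inv_rev, nonsing_inv_nonsing_inv _ hP, mul_assoc]

end Matrix.Diagonalizable

theorem diagonalizable_of_semidirect_iso_general
    (k : ℕ)
    (A B : Matrix (Fin k) (Fin k) ℤ)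
    (hA1 : (A - 1).det ≠ 0) (hB1 : (B - 1).det ≠ 0)
    (eA : AddAut (Fin k → ℤ)) (heA : ∀ v, eA v = A.mulVec v)
    (eB : AddAut (Fin k → ℤ)) (heB : ∀ v, eB v = B.mulVec v)
    (hiso : Nonempty (SemidirectZ k eA ≃* SemidirectZ k eB))
    (hdiag : (A.map (Int.cast : ℤ → ℂ)).Diagonalizable) :
    (B.map (Int.cast : ℤ → ℂ)).Diagonalizable := by
  obtain ⟨Φ⟩ := hiso
  obtain ⟨u, hu⟩ := SemidirectProduct.exists_isConj_of_mulEquiv Φ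
    (SemidirectZ.map_inl_eq_one hA1 heA) (SemidirectZ.map_inl_eq_one hB1 heB)
  have hconj := (MulAut.toGL k).map_isConj hu
  simp only [zpowersHom_apply, toAdd_ofAdd, zpow_one, map_zpow] at hconj
  rw [← MulAut.coe_toGL_toMultiplicative heA] at hdiag
  rw [← MulAut.coe_toGL_toMultiplicative heB]
  rcases Int.units_eq_one_or u with rfl | rfl
  · simpa using hdiag.of_isConj hconj
  · simpa using (hdiag.of_isConj hconj).inv

/-- **Corollary (Endo–Pajitnov)**.  Let `A, B ∈ SL(k, ℤ)` such that `1` is not an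
eigenvalue of `A` nor of `B`.  If `S_A ≅ S_B` and `A` is diagonalizable over `ℂ`, then
`B` is diagonalizable over `ℂ`. -/
theorem diagonalizable_of_semidirect_iso
    (k : ℕ) (hk : 1 ≤ k)
    (A B : Matrix (Fin k) (Fin k) ℤ) (hA : A.det = 1) (hB : B.det = 1)
    (hA1 : (A - 1).det ≠ 0) (hB1 : (B - 1).det ≠ 0)
    (eA : AddAut (Fin k → ℤ)) (heA : ∀ v, eA v = A.mulVec v)
    (eB : AddAut (Fin k → ℤ)) (heB : ∀ v, eB v = B.mulVec v)
    (hiso : Nonempty (SemidirectZ k eA ≃* SemidirectZ k eB))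
    (hdiag : (A.map (Int.cast : ℤ → ℂ)).Diagonalizable) :
    (B.map (Int.cast : ℤ → ℂ)).Diagonalizable :=
  diagonalizable_of_semidirect_iso_general k A B hA1 hB1 eA heA eB heB hiso hdiag
end

section
/- Let k ≥ 1 and let A, B ∈ SL(k, ℤ). Suppose A is diagonalizable over ℂ with all eigenvalues different from 1, and B is not diagonalizable over ℂ and has all eigenvalues different from 1. Then the groups S_A and S_B are not isomorphic. -/
/-!
In `S_A` the normal subgroup `ℤ^k` is characteristic as soon as `1` is not an eigenvalue of `A`:
it consists exactly of the elements whose image in the abelianization has finite order. Indeed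
`det (1 - A) • u = w - A w` for `w = adj (1 - A) u`, and `w - A w` is a commutator, while the
quotient `ℤ` is torsion-free. Hence an isomorphism `S_A ≃* S_B` restricts to an automorphism `P`
of `ℤ^k` and induces `±1` on the quotient `ℤ`, so that `P A P⁻¹ = B^{±1}`. Conjugation and
inversion preserve diagonalizability over `ℂ`, so `B` would be diagonalizable.
-/

open Matrix

open SemidirectProduct

namespace SemidirectProduct

section Group

variable {N G : Type*} [Group N] [Group G] {φ : G →* MulAut N}

theorem inl_left_of_rightHom_eq_one {x : N ⋊[φ] G} (h : rightHom x = 1) : inl x.left = x := by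
  ext <;> simp_all

theorem abelianization_of_inl_aut (g : G) (n : N) :
    Abelianization.of (inl (φ g n) : N ⋊[φ] G) = Abelianization.of (inl n) := by
  rw [inl_aut, map_inv, map_mul, map_mul, map_inv, mul_comm (Abelianization.of _),
    mul_inv_cancel_right]

end Group

theorem rightHom_eq_one_of_isOfFinOrder {N G : Type*} [Group N] [CommGroup G] [IsMulTorsionFree G]
    {φ : G →* MulAut N} {x : N ⋊[φ] G} (h : IsOfFinOrder (Abelianization.of x)) :
    rightHom x = 1 := by
  simpa using ((Abelianization.lift rightHom).isOfFinOrder h).eq_one'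

theorem mul_inl_mul_inv_s13 {N G : Type*} [CommGroup N] [Group G] {φ : G →* MulAut N}
    (x : N ⋊[φ] G) (n : N) : x * inl n * x⁻¹ = inl (φ x.right n) := by
  ext <;> simp [mul_comm]

section Isomorphism

variable {N G N' G' : Type*} [Group N] [Group G] [Group N'] [Group G']
  {φ : G →* MulAut N} {ψ : G' →* MulAut N'}
  (f : N ⋊[φ] G ≃* N' ⋊[ψ] G') (hf : ∀ x, rightHom (f x) = 1 ↔ rightHom x = 1)

include hf in
theorem inl_left_map_inl (n : N) : inl (f (inl n)).left = f (inl n) :=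
  inl_left_of_rightHom_eq_one ((hf _).2 (rightHom_inl n))

include hf in
theorem inl_left_symm_inl (n : N') : inl (f.symm (inl n)).left = f.symm (inl n) :=
  inl_left_of_rightHom_eq_one ((hf _).1 (by rw [f.apply_symm_apply, rightHom_inl]))

def leftEquiv : N ≃* N' where
  toFun n := (f (inl n)).left
  invFun n := (f.symm (inl n)).left
  left_inv n := by simp only [inl_left_map_inl f hf, f.symm_apply_apply, left_inl]
  right_inv n := by simp only [inl_left_symm_inl f hf, f.apply_symm_apply, left_inl]
  map_mul' a b := inl_injective (φ := ψ) <| by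
    rw [map_mul inl (f (inl a)).left, inl_left_map_inl f hf, inl_left_map_inl f hf,
      inl_left_map_inl f hf, map_mul, map_mul]

theorem inl_leftEquiv (n : N) : inl (leftEquiv f hf n) = f (inl n) :=
  inl_left_map_inl f hf n

include hf in
theorem rightHom_map_eq_rightHom_map_inr_right (x : N ⋊[φ] G) :
    rightHom (f x) = rightHom (f (inr x.right)) := by
  conv_lhs => rw [← inl_left_mul_inr_right x]
  rw [map_mul, map_mul, (hf _).2 (rightHom_inl _), one_mul]

end Isomorphism

theorem leftEquiv_aut {N G N' G' : Type*} [Group N] [Group G] [CommGroup N'] [Group G']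
    {φ : G →* MulAut N} {ψ : G' →* MulAut N'} (f : N ⋊[φ] G ≃* N' ⋊[ψ] G')
    (hf : ∀ x, rightHom (f x) = 1 ↔ rightHom x = 1) (g : G) (n : N) :
    leftEquiv f hf (φ g n) = ψ (rightHom (f (inr g))) (leftEquiv f hf n) := by
  refine inl_injective (φ := ψ) ?_
  rw [inl_leftEquiv, inl_aut, map_mul, map_mul, map_inv, map_inv, ← inl_leftEquiv f hf,
    mul_inl_mul_inv_s13, rightHom_eq_right]

theorem toAdd_rightHom_map_inr_ofAdd_one {N N' : Type*} [Group N] [Group N']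
    {φ : Multiplicative ℤ →* MulAut N} {ψ : Multiplicative ℤ →* MulAut N'}
    (f : N ⋊[φ] Multiplicative ℤ ≃* N' ⋊[ψ] Multiplicative ℤ)
    (hf : ∀ x, rightHom (f x) = 1 ↔ rightHom x = 1) :
    (rightHom (f (inr (.ofAdd 1)))).toAdd = 1 ∨ (rightHom (f (inr (.ofAdd 1)))).toAdd = -1 := by
  obtain ⟨x, hx⟩ := (rightHom_surjective.comp f.surjective) (.ofAdd (1 : ℤ))
  have hright : x.right = .ofAdd 1 ^ x.right.toAdd := by simp [← ofAdd_zsmul]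
  rw [Function.comp_apply, rightHom_map_eq_rightHom_map_inr_right f hf, hright, map_zpow,
    map_zpow, map_zpow] at hx
  refine Int.eq_one_or_neg_one_of_mul_eq_one (v := x.right.toAdd) ?_
  rw [mul_comm, ← smul_eq_mul, ← toAdd_zpow, hx, toAdd_ofAdd]

end SemidirectProduct

theorem Matrix.exists_det_one_sub_smul_eq_sub_mulVec {n R : Type*} [Fintype n] [DecidableEq n]
    [CommRing R] (M : Matrix n n R) (u : n → R) : ∃ w, (1 - M).det • u = w - M *ᵥ w :=
  ⟨(1 - M).adjugate *ᵥ u, by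
    nth_rw 1 [← one_mulVec ((1 - M).adjugate *ᵥ u)]
    rw [← sub_mulVec, mulVec_mulVec, mul_adjugate, smul_mulVec, one_mulVec]⟩

theorem Matrix.det_one_sub_ne_zero_of_forall_mem_roots_ne_one {n : Type*} [Fintype n]
    [DecidableEq n] {M : Matrix n n ℤ}
    (hM : ∀ μ ∈ (M.map (Int.cast : ℤ → ℂ)).charpoly.roots, μ ≠ 1) : (1 - M).det ≠ 0 := by
  intro h
  refine hM 1 ?_ rfl
  rw [Polynomial.mem_roots (charpoly_monic _).ne_zero, Polynomial.IsRoot,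
    show (Int.cast : ℤ → ℂ) = Int.castRingHom ℂ from rfl, charpoly_map, Polynomial.eval_one_map,
    eval_charpoly, scalar_apply, diagonal_one, h, map_zero]

namespace Matrix.Diagonalizable

variable {k : ℕ} {M : Matrix (Fin k) (Fin k) ℂ}

theorem inv_s13 (h : M.Diagonalizable) : M⁻¹.Diagonalizable := by
  obtain ⟨P, D, hP, hD, rfl⟩ := h
  refine ⟨P, D⁻¹, hP, ?_, ?_⟩
  · rw [← hD.diagonal_diag, inv_diagonal]
    exact isDiag_diagonal _
  · rw [mul_inv_rev, mul_inv_rev, nonsing_inv_nonsing_inv _ hP, mul_assoc]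

theorem units_conj (U : (Matrix (Fin k) (Fin k) ℂ)ˣ) (h : M.Diagonalizable) :
    (U * M * ((U⁻¹ : (Matrix (Fin k) (Fin k) ℂ)ˣ) : Matrix (Fin k) (Fin k) ℂ)).Diagonalizable := by
  obtain ⟨P, D, hP, hD, rfl⟩ := h
  refine ⟨P * ((U⁻¹ : (Matrix (Fin k) (Fin k) ℂ)ˣ) : Matrix (Fin k) (Fin k) ℂ), D, ?_, hD, ?_⟩
  · rw [det_mul]
    exact hP.mul (isUnits_det_units _)
  · rw [mul_inv_rev, ← coe_units_inv, inv_inv]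
    simp only [mul_assoc]

theorem of_units_conj_eq_zpow {U V W : (Matrix (Fin k) (Fin k) ℂ)ˣ} {m : ℤ}
    (hm : m = 1 ∨ m = -1) (h : W * U * W⁻¹ = V ^ m)
    (hU : (U : Matrix (Fin k) (Fin k) ℂ).Diagonalizable) :
    (V : Matrix (Fin k) (Fin k) ℂ).Diagonalizable := by
  have hconj := hU.units_conj W
  rw [← Units.val_mul, ← Units.val_mul, h] at hconj
  rcases hm with rfl | rfl
  · rwa [zpow_one] at hconj
  · rw [_root_.zpow_neg_one, coe_units_inv] at hconj
    simpa using hconj.inv_s13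

end Matrix.Diagonalizable

def MulAut.toComplexMatrix (n : Type*) [Fintype n] [DecidableEq n] :
    MulAut (Multiplicative (n → ℤ)) →* (Matrix n n ℂ)ˣ :=
  ((Int.castRingHom ℂ).mapMatrix.toMonoidHom.comp <|
    (LinearMap.toMatrixAlgEquiv' : _ ≃ₐ[ℤ] Matrix n n ℤ).toMonoidHom.comp
      { toFun a := (MonoidHom.toAdditive a.toMonoidHom).toIntLinearMap
        map_one' := rfl
        map_mul' _ _ := rfl }).toHomUnits

theorem MulAut.coe_toComplexMatrix_toMultiplicative {n : Type*} [Fintype n] [DecidableEq n]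
    {e : AddAut (n → ℤ)} {M : Matrix n n ℤ} (he : ∀ v, e v = M *ᵥ v) :
    (MulAut.toComplexMatrix n (AddEquiv.toMultiplicative e) : Matrix n n ℂ) = M.map Int.cast := by
  ext i j
  change ((e (Pi.single j 1) i : ℤ) : ℂ) = M i j
  rw [he, mulVec_single_one, col_apply]

namespace SemidirectZ

open Multiplicative

variable {k : ℕ} {e e₁ e₂ : AddAut (Fin k → ℤ)} {M M₁ M₂ : Matrix (Fin k) (Fin k) ℤ}

theorem isOfFinOrder_abelianization_of_inl (he : ∀ v, e v = M *ᵥ v) (hd : (1 - M).det ≠ 0)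
    (n : Multiplicative (Fin k → ℤ)) :
    IsOfFinOrder (Abelianization.of (inl n : SemidirectZ k e)) := by
  obtain ⟨w, hw⟩ := M.exists_det_one_sub_smul_eq_sub_mulVec n.toAdd
  have hact : zpowersHom _ (AddEquiv.toMultiplicative e) (ofAdd 1) (ofAdd w) =
      ofAdd (M *ᵥ w) := by
    simp [he]
  rw [isOfFinOrder_iff_zpow_eq_one]
  refine ⟨_, hd, ?_⟩
  calc Abelianization.of (inl n : SemidirectZ k e) ^ (1 - M).det
      = Abelianization.of (inl (ofAdd w)) / Abelianization.of (inl (ofAdd (M *ᵥ w))) := by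
        rw [← map_zpow, ← map_zpow, ← map_div, ← map_div, ← ofAdd_sub, ← hw]
        rfl
    _ = 1 := by rw [← hact, abelianization_of_inl_aut, div_self']

theorem rightHom_eq_one_iff_isOfFinOrder (he : ∀ v, e v = M *ᵥ v) (hd : (1 - M).det ≠ 0)
    (x : SemidirectZ k e) : rightHom x = 1 ↔ IsOfFinOrder (Abelianization.of x) :=
  ⟨fun h => inl_left_of_rightHom_eq_one h ▸ isOfFinOrder_abelianization_of_inl he hd _,
    rightHom_eq_one_of_isOfFinOrder⟩

theorem rightHom_map_eq_one_iff (f : SemidirectZ k e₁ ≃* SemidirectZ k e₂)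
    (he₁ : ∀ v, e₁ v = M₁ *ᵥ v) (he₂ : ∀ v, e₂ v = M₂ *ᵥ v)
    (hd₁ : (1 - M₁).det ≠ 0) (hd₂ : (1 - M₂).det ≠ 0) (x : SemidirectZ k e₁) :
    rightHom (f x) = 1 ↔ rightHom x = 1 := by
  rw [rightHom_eq_one_iff_isOfFinOrder he₂ hd₂, rightHom_eq_one_iff_isOfFinOrder he₁ hd₁,
    ← abelianizationCongr_of]
  exact f.abelianizationCongr.injective.isOfFinOrder_iff (f := f.abelianizationCongr.toMonoidHom)

theorem exists_conj_eq_zpow (f : SemidirectZ k e₁ ≃* SemidirectZ k e₂)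
    (hf : ∀ x, rightHom (f x) = 1 ↔ rightHom x = 1) :
    ∃ p : MulAut (Multiplicative (Fin k → ℤ)), ∃ m : ℤ, (m = 1 ∨ m = -1) ∧
      p * AddEquiv.toMultiplicative e₁ * p⁻¹ = AddEquiv.toMultiplicative e₂ ^ m := by
  refine ⟨leftEquiv f hf, _, toAdd_rightHom_map_inr_ofAdd_one f hf, ?_⟩
  rw [mul_inv_eq_iff_eq_mul]
  ext n : 1
  simpa using leftEquiv_aut f hf (ofAdd 1) n

end SemidirectZ

theorem semidirect_diag_not_iso_nondiag_general
    (k : ℕ)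
    (A B : Matrix (Fin k) (Fin k) ℤ)
    (hAdiag : (A.map (Int.cast : ℤ → ℂ)).Diagonalizable)
    (hAeig : ∀ μ ∈ (A.map (Int.cast : ℤ → ℂ)).charpoly.roots, μ ≠ 1)
    (hBdiag : ¬ (B.map (Int.cast : ℤ → ℂ)).Diagonalizable)
    (hBeig : ∀ μ ∈ (B.map (Int.cast : ℤ → ℂ)).charpoly.roots, μ ≠ 1)
    (eA : AddAut (Fin k → ℤ)) (heA : ∀ v, eA v = A.mulVec v)
    (eB : AddAut (Fin k → ℤ)) (heB : ∀ v, eB v = B.mulVec v) :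
    ¬ Nonempty (SemidirectZ k eA ≃* SemidirectZ k eB) := by
  rintro ⟨f⟩
  obtain ⟨p, m, hm, hconj⟩ := SemidirectZ.exists_conj_eq_zpow f <|
    SemidirectZ.rightHom_map_eq_one_iff f heA heB
    (det_one_sub_ne_zero_of_forall_mem_roots_ne_one hAeig)
    (det_one_sub_ne_zero_of_forall_mem_roots_ne_one hBeig)
  apply hBdiag
  rw [← MulAut.coe_toComplexMatrix_toMultiplicative heB]
  refine Diagonalizable.of_units_conj_eq_zpow (W := MulAut.toComplexMatrix (Fin k) p) hm ?_
    ((MulAut.coe_toComplexMatrix_toMultiplicative heA).symm ▸ hAdiag)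
  rw [← map_zpow, ← hconj, map_mul, map_mul, map_inv]

/-- **Corollary (Endo–Pajitnov)**.  Let `A, B ∈ SL(k, ℤ)`.  If `A` is diagonalizable over
`ℂ` with all eigenvalues different from `1`, and `B` is not diagonalizable over `ℂ` and has
all eigenvalues different from `1`, then the groups `S_A` and `S_B` are not isomorphic. -/
theorem semidirect_diag_not_iso_nondiag
    (k : ℕ) (hk : 1 ≤ k)
    (A B : Matrix (Fin k) (Fin k) ℤ) (hA : A.det = 1) (hB : B.det = 1)
    (hAdiag : (A.map (Int.cast : ℤ → ℂ)).Diagonalizable)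
    (hAeig : ∀ μ ∈ (A.map (Int.cast : ℤ → ℂ)).charpoly.roots, μ ≠ 1)
    (hBdiag : ¬ (B.map (Int.cast : ℤ → ℂ)).Diagonalizable)
    (hBeig : ∀ μ ∈ (B.map (Int.cast : ℤ → ℂ)).charpoly.roots, μ ≠ 1)
    (eA : AddAut (Fin k → ℤ)) (heA : ∀ v, eA v = A.mulVec v)
    (eB : AddAut (Fin k → ℤ)) (heB : ∀ v, eB v = B.mulVec v) :
    ¬ Nonempty (SemidirectZ k eA ≃* SemidirectZ k eB) :=
  semidirect_diag_not_iso_nondiag_general k A B hAdiag hAeig hBdiag hBeig eA heA eB heB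
end

section
/- Let k ≥ 1 and A ∈ SL(k, ℤ) with det(A − I) ≠ 0. Then every surjective group homomorphism φ : S_A → ℤ vanishes on the normal subgroup ℤ^k, and there are exactly two surjective homomorphisms S_A → ℤ: if φ and ψ are both surjective homomorphisms S_A → ℤ, then ψ = φ or ψ = −φ. -/
/-!
Conjugation by the generator `t` of `ℤ` acts on `ℤ^k` as `A`, so every homomorphism `χ` from
`S_A` to an abelian group restricts to a linear form `f` on `ℤ^k` with `f ∘ A = f`. Then `f`
kills the image of `A - 1`, which contains `det (A - 1) • ℤ^k`; when the target is torsion-free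
this forces `f = 0`. Hence every `χ : S_A → ℤ` factors through `S_A ⧸ ℤ^k ≅ ℤ`, and the only
surjective endomorphisms of `ℤ` are `± id`.
-/

open Matrix

/-- The normal subgroup `ℤ^k` of `S_A`. -/
def SemidirectZ.N (k : ℕ) (e : AddAut (Fin k → ℤ)) : Subgroup (SemidirectZ k e) :=
  MonoidHom.range
    (SemidirectProduct.inl :
      Multiplicative (Fin k → ℤ) →* SemidirectProduct (Multiplicative (Fin k → ℤ))
        (Multiplicative ℤ)
        (zpowersHom (MulAut (Multiplicative (Fin k → ℤ))) (AddEquiv.toMultiplicative e)))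

theorem AddMonoidHom.eq_zero_of_map_mulVec_eq {n M : Type*} [Fintype n] [DecidableEq n]
    [AddCommGroup M] [IsAddTorsionFree M] {A : Matrix n n ℤ} (hA : (A - 1).det ≠ 0)
    (f : (n → ℤ) →+ M) (hf : ∀ v, f (A *ᵥ v) = f v) : f = 0 := by
  have h_range (v : n → ℤ) : f ((A - 1) *ᵥ v) = 0 := by
    rw [sub_mulVec, one_mulVec, map_sub, hf, sub_self]
  refine AddMonoidHom.ext fun w => ?_
  have h_adj : (A - 1) *ᵥ ((A - 1).adjugate *ᵥ w) = (A - 1).det • w := by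
    rw [mulVec_mulVec, mul_adjugate, smul_mulVec, one_mulVec]
  have := h_range ((A - 1).adjugate *ᵥ w)
  rwa [h_adj, map_zsmul, IsAddTorsionFree.zsmul_eq_zero_iff_right hA] at this

theorem isUnit_toAdd_map_ofAdd_one_of_surjective {χ : Multiplicative ℤ →* Multiplicative ℤ}
    (hχ : Function.Surjective χ) : IsUnit (χ (.ofAdd 1)).toAdd := by
  obtain ⟨n, hn⟩ := hχ (.ofAdd 1)
  rw [χ.apply_mint] at hn
  exact .of_mul_eq_one_right _ (by simpa using congrArg Multiplicative.toAdd hn)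

theorem eq_or_eq_inv_of_surjective_mint {χ₁ χ₂ : Multiplicative ℤ →* Multiplicative ℤ}
    (h₁ : Function.Surjective χ₁) (h₂ : Function.Surjective χ₂) : χ₂ = χ₁ ∨ χ₂ = χ₁⁻¹ := by
  rcases Int.isUnit_eq_or_eq_neg (isUnit_toAdd_map_ofAdd_one_of_surjective h₂)
    (isUnit_toAdd_map_ofAdd_one_of_surjective h₁) with h | h
  · exact .inl (MonoidHom.ext_mint (Multiplicative.toAdd.injective h))
  · exact .inr (MonoidHom.ext_mint (Multiplicative.toAdd.injective h))

namespace SemidirectProduct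

variable {N G : Type*} [Group N] [Group G] {φ : G →* MulAut N}

theorem map_inl_aut {M : Type*} [CommGroup M] (χ : N ⋊[φ] G →* M) (g : G) (n : N) :
    χ (inl (φ g n)) = χ (inl n) := by
  rw [inl_aut, map_mul, map_mul, mul_right_comm, ← map_mul χ (inr g), ← map_mul inr,
    mul_inv_cancel, map_one, map_one, one_mul]

theorem eq_comp_rightHom_of_map_inl {H : Type*} [Group H] {χ : N ⋊[φ] G →* H}
    (hχ : ∀ n, χ (inl n) = 1) : χ = (χ.comp inr).comp rightHom := by
  ext x
  conv_lhs => rw [← inl_left_mul_inr_right x]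
  rw [map_mul, hχ, one_mul]
  rfl

theorem eq_or_eq_inv_of_surjective_of_map_inl {φ : Multiplicative ℤ →* MulAut N}
    {χ₁ χ₂ : N ⋊[φ] Multiplicative ℤ →* Multiplicative ℤ}
    (h₁ : ∀ n, χ₁ (inl n) = 1) (h₂ : ∀ n, χ₂ (inl n) = 1)
    (hs₁ : Function.Surjective χ₁) (hs₂ : Function.Surjective χ₂) : χ₂ = χ₁ ∨ χ₂ = χ₁⁻¹ := by
  rw [eq_comp_rightHom_of_map_inl h₁, eq_comp_rightHom_of_map_inl h₂]
  rw [eq_comp_rightHom_of_map_inl h₁, MonoidHom.coe_comp] at hs₁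
  rw [eq_comp_rightHom_of_map_inl h₂, MonoidHom.coe_comp] at hs₂
  rcases eq_or_eq_inv_of_surjective_mint hs₁.of_comp hs₂.of_comp with h | h
  · exact .inl (by rw [h])
  · exact .inr (by rw [h]; rfl)

end SemidirectProduct

theorem SemidirectZ.N_le_ker {k : ℕ} {e : AddAut (Fin k → ℤ)} {A : Matrix (Fin k) (Fin k) ℤ}
    (hA : (A - 1).det ≠ 0) (he : ∀ v, e v = A *ᵥ v) {M : Type*} [CommGroup M]
    [IsMulTorsionFree M] (χ : SemidirectZ k e →* M) : N k e ≤ χ.ker := by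
  rintro _ ⟨n, rfl⟩
  have h_inv (v : Fin k → ℤ) : χ (.inl (.ofAdd (e v))) = χ (.inl (.ofAdd v)) :=
    SemidirectProduct.map_inl_aut
      (φ := zpowersHom (MulAut (Multiplicative (Fin k → ℤ))) (AddEquiv.toMultiplicative e))
      χ (.ofAdd 1) (.ofAdd v)
  have := (MonoidHom.toAdditiveRight (χ.comp SemidirectProduct.inl)).eq_zero_of_map_mulVec_eq hA
    fun v => congrArg Additive.ofMul (he v ▸ h_inv v)
  exact congrArg Additive.toMul (DFunLike.congr_fun this n.toAdd)

theorem surjective_hom_to_int_general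
    (k : ℕ)
    (A : Matrix (Fin k) (Fin k) ℤ) (hA1 : (A - 1).det ≠ 0)
    (e : AddAut (Fin k → ℤ)) (he : ∀ v, e v = A.mulVec v) :
    ∀ φ : SemidirectZ k e →* Multiplicative ℤ, Function.Surjective φ →
      (∀ x ∈ SemidirectZ.N k e, φ x = 1)
        ∧ ∀ ψ : SemidirectZ k e →* Multiplicative ℤ, Function.Surjective ψ →
            (ψ = φ ∨ ∀ g, ψ g = (φ g)⁻¹) := by
  intro φ hφ
  have h_ker (χ : SemidirectZ k e →* Multiplicative ℤ) := SemidirectZ.N_le_ker hA1 he χ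
  refine ⟨fun x hx => h_ker φ hx, fun ψ hψ => ?_⟩
  rcases SemidirectProduct.eq_or_eq_inv_of_surjective_of_map_inl (fun n => h_ker φ ⟨n, rfl⟩)
    (fun n => h_ker ψ ⟨n, rfl⟩) hφ hψ with h | h
  · exact .inl h
  · exact .inr fun g => DFunLike.congr_fun h g

/-- **(Endo–Pajitnov)**  Let `A ∈ SL(k, ℤ)` with `det (A - I) ≠ 0`.  Then every surjective
group homomorphism `φ : S_A → ℤ` vanishes on the normal subgroup `ℤ^k`, and there are
exactly two surjective homomorphisms `S_A → ℤ`: any two of them agree or differ by a sign. -/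
theorem surjective_hom_to_int
    (k : ℕ) (hk : 1 ≤ k)
    (A : Matrix (Fin k) (Fin k) ℤ) (hA : A.det = 1) (hA1 : (A - 1).det ≠ 0)
    (e : AddAut (Fin k → ℤ)) (he : ∀ v, e v = A.mulVec v) :
    ∀ φ : SemidirectZ k e →* Multiplicative ℤ, Function.Surjective φ →
      (∀ x ∈ SemidirectZ.N k e, φ x = 1)
        ∧ ∀ ψ : SemidirectZ k e →* Multiplicative ℤ, Function.Surjective ψ →
            (ψ = φ ∨ ∀ g, ψ g = (φ g)⁻¹) :=
  surjective_hom_to_int_general k A hA1 e he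
end

section
/- Every H_M-invariant holomorphic function on ℍ × ℂⁿ is constant: if f : ℍ × ℂⁿ → ℂ is holomorphic and satisfies f(p + u_i) = f(p) for all p ∈ ℍ × ℂⁿ and all i ∈ {1, …, 2n+1}, then f is constant. -/
open Matrix Polynomial

/-!
The vectors `a`, `b₁, …, bₙ` and their conjugates span `ℂ^{2n+1}`: every generalized eigenspace
of `M` lies in `ℂ a`, `W` or `W̄`, and the one for `α` is the line `ℂ a` because `α` is a simple
root of the characteristic polynomial. Hence a real vector orthogonal to `a` and `W` vanishes, so
the `uᵢ` are `ℝ`-linearly independent and span the real hyperplane `ℝ × ℂⁿ`; the lattice they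
generate is cocompact there. For fixed `w ∈ ℍ` the entire function `z ↦ f (w, z)` therefore takes
its values in the image of a compact set, and is constant by Liouville. Finally the `a⁽ⁱ⁾` generate
a dense subgroup of `ℝ` (a cyclic one would make `α` rational), so `w ↦ f (w, 0)` is invariant
under all real translations, has zero derivative, and is constant on the convex set `ℍ`.
-/

open Module

namespace Matrix

variable {ι : Type*} [Fintype ι]

lemma star_mulVec_eq_mulVec_star {A : Matrix ι ι ℂ} (hA : A.map (starRingEnd ℂ) = A)
    (v : ι → ℂ) : star (A *ᵥ v) = A *ᵥ star v := by
  funext i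
  simp only [Pi.star_apply, mulVec, dotProduct, star_sum, star_mul']
  conv_rhs => rw [← hA]
  simp

lemma star_mem_maxGenEigenspace_mulVecLin {A : Matrix ι ι ℂ}
    (hA : A.map (starRingEnd ℂ) = A) {μ : ℂ} {v : ι → ℂ}
    (hv : v ∈ End.maxGenEigenspace A.mulVecLin μ) :
    star v ∈ End.maxGenEigenspace A.mulVecLin (starRingEnd ℂ μ) := by
  have hstar : ∀ (k : ℕ) (w : ι → ℂ), star (((A.mulVecLin - μ • 1) ^ k) w) =
      ((A.mulVecLin - starRingEnd ℂ μ • 1) ^ k) (star w) := by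
    intro k
    induction k with
    | zero => simp
    | succ k ih =>
      intro w
      rw [pow_succ, pow_succ, End.mul_apply, End.mul_apply, ih]
      simp [star_mulVec_eq_mulVec_star hA]
  obtain ⟨k, hk⟩ := (End.mem_maxGenEigenspace _ _ _).mp hv
  exact (End.mem_maxGenEigenspace _ _ _).mpr ⟨k, by rw [← hstar, hk, star_zero]⟩

end Matrix

lemma Module.End.maxGenEigenspace_eq_span_singleton {K V : Type*} [Field K] [AddCommGroup V]
    [Module K V] [FiniteDimensional K V] {φ : End K V} {μ : K} {v : V}
    (hv : φ.HasEigenvector μ v) (hμ : φ.charpoly.rootMultiplicity μ = 1) :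
    φ.maxGenEigenspace μ = K ∙ v := by
  symm
  refine Submodule.eq_of_le_of_finrank_le ?_ ?_
  · rw [Submodule.span_singleton_le_iff_mem]
    exact φ.eigenspace_le_maxGenEigenspace hv.1
  · rw [LinearMap.finrank_maxGenEigenspace_eq, hμ, finrank_span_singleton hv.2]

lemma Polynomial.rootMultiplicity_X_sub_C_mul {R : Type*} [CommRing R] [IsDomain R] {p : R[X]}
    {x : R} (hp : ¬ p.IsRoot x) : ((X - C x) * p).rootMultiplicity x = 1 := by
  have hp0 : p ≠ 0 := by rintro rfl; exact hp (by simp)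
  rw [rootMultiplicity_mul (mul_ne_zero (X_sub_C_ne_zero x) hp0),
    rootMultiplicity_X_sub_C_self, rootMultiplicity_eq_zero hp]

lemma Module.End.eq_top_of_forall_isRoot_charpoly_maxGenEigenspace_le_s15 {K V : Type*} [Field K]
    [IsAlgClosed K] [AddCommGroup V] [Module K V] [FiniteDimensional K V] (φ : End K V)
    {N : Submodule K V} (hN : ∀ μ, φ.charpoly.IsRoot μ → φ.maxGenEigenspace μ ≤ N) : N = ⊤ := by
  rw [eq_top_iff, ← φ.iSup_maxGenEigenspace_eq_top, iSup_le_iff]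
  intro μ
  by_cases hμ : φ.charpoly.IsRoot μ
  · exact hN μ hμ
  · have hbot : φ.maxGenEigenspace μ = ⊥ := Submodule.finrank_eq_zero.mp <| by
      rw [LinearMap.finrank_maxGenEigenspace_eq, rootMultiplicity_eq_zero hμ]
    exact hbot ▸ bot_le

lemma map_add_eq_of_mem_addSubgroupClosure {G X : Type*} [AddGroup G] {U : Set G} {f : G → X}
    {s : Set G} (hsU : ∀ v ∈ s, ∀ p, p + v ∈ U ↔ p ∈ U) (hsf : ∀ v ∈ s, ∀ p ∈ U, f (p + v) = f p)
    {v : G} (hv : v ∈ AddSubgroup.closure s) : ∀ p ∈ U, f (p + v) = f p := by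
  suffices (∀ p, p + v ∈ U ↔ p ∈ U) ∧ ∀ p ∈ U, f (p + v) = f p from this.2
  induction hv using AddSubgroup.closure_induction with
  | mem v hv => exact ⟨hsU v hv, hsf v hv⟩
  | zero => simp
  | add v w _ _ hv hw =>
    refine ⟨fun p => by rw [← add_assoc, hw.1, hv.1], fun p hp => ?_⟩
    rw [← add_assoc, hw.2 _ ((hv.1 p).mpr hp), hv.2 p hp]
  | neg v _ hv =>
    have hU : ∀ p, p + -v ∈ U ↔ p ∈ U := fun p => by
      rw [← hv.1 (p + -v), neg_add_cancel_right]
    refine ⟨hU, fun p hp => ?_⟩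
    rw [← hv.2 _ ((hU p).mpr hp), neg_add_cancel_right]

lemma exists_mem_addSubgroupClosure_sub_mem_image_Icc {ι E : Type*} [Fintype ι]
    [AddCommGroup E] [Module ℝ E] (u : ι → E) (x : ι → ℝ) :
    ∃ γ ∈ AddSubgroup.closure (Set.range u),
      Fintype.linearCombination ℝ u x - γ ∈ Fintype.linearCombination ℝ u '' Set.Icc 0 1 := by
  refine ⟨Fintype.linearCombination ℝ u fun i => (⌊x i⌋ : ℝ), ?_, fun i => Int.fract (x i), ?_, ?_⟩
  · rw [Fintype.linearCombination_apply]
    refine AddSubgroup.sum_mem _ fun i _ => ?_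
    rw [Int.cast_smul_eq_zsmul]
    exact AddSubgroup.zsmul_mem _ (AddSubgroup.subset_closure (Set.mem_range_self i)) _
  · exact ⟨fun i => Int.fract_nonneg _, fun i => (Int.fract_lt_one _).le⟩
  · exact map_sub _ _ _

lemma dense_addSubgroupClosure_range_of_mulVec_eq_smul {ι : Type*} [Fintype ι]
    (M : Matrix ι ι ℤ) {α : ℝ} (hα : Irrational α) {a : ι → ℝ} (ha0 : a ≠ 0)
    (ha : (M.map (Int.cast : ℤ → ℝ)) *ᵥ a = α • a) :
    Dense (AddSubgroup.closure (Set.range a) : Set ℝ) := by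
  refine (AddSubgroup.dense_or_cyclic _).resolve_right ?_
  rintro ⟨a₀, h⟩
  have hm : ∀ i, ∃ m : ℤ, m • a₀ = a i := fun i =>
    AddSubgroup.mem_closure_singleton.mp (h ▸ AddSubgroup.subset_closure ⟨i, rfl⟩)
  choose m hm using hm
  have ha' : a = a₀ • fun i => (m i : ℝ) := funext fun i => by
    simp [← hm i, zsmul_eq_mul, mul_comm]
  have ha₀ : a₀ ≠ 0 := by rintro rfl; exact ha0 (by simpa using ha')
  obtain ⟨i, hi⟩ : ∃ i, m i ≠ 0 := by
    by_contra! hm0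
    exact ha0 (by rw [ha']; ext; simp [hm0])
  have hmα : (M.map (Int.cast : ℤ → ℝ)) *ᵥ (fun i => (m i : ℝ)) = α • fun i => (m i : ℝ) := by
    rw [ha', mulVec_smul, smul_comm] at ha
    exact smul_right_injective _ ha₀ ha
  refine (hα.mul_intCast hi).ne_int (∑ j, M i j * m j) ?_
  simpa [mulVec, dotProduct, mul_comm] using (congrFun hmα i).symm

section HalfSpace

variable {F : Type*} {ι : Type*} [Fintype ι]

lemma range_linearCombination_eq_ker_im_fst [AddCommGroup F] [Module ℂ F] [FiniteDimensional ℂ F]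
    {u : ι → ℂ × F} (hu : ∀ i, (u i).1.im = 0)
    (hinj : Function.Injective (Fintype.linearCombination ℝ u))
    (hcard : Fintype.card ι = 2 * finrank ℂ F + 1) :
    LinearMap.range (Fintype.linearCombination ℝ u)
      = LinearMap.ker (Complex.imLm ∘ₗ LinearMap.fst ℝ ℂ F) := by
  refine Submodule.eq_of_le_of_finrank_eq ?_ ?_
  · rintro - ⟨x, rfl⟩
    simp [Fintype.linearCombination_apply, hu]
  · have hsurj : LinearMap.range (Complex.imLm ∘ₗ LinearMap.fst ℝ ℂ F) = ⊤ :=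
      LinearMap.range_eq_top.mpr fun r => ⟨(r * Complex.I, 0), by simp⟩
    have hker := LinearMap.finrank_range_add_finrank_ker (Complex.imLm ∘ₗ LinearMap.fst ℝ ℂ F)
    rw [hsurj, finrank_top, Module.finrank_prod, Complex.finrank_real_complex,
      finrank_real_of_complex, Module.finrank_self] at hker
    rw [LinearMap.finrank_range_of_inj hinj, Module.finrank_fintype_fun_eq_card, hcard]
    omega

lemma apply_eq_apply_zero_of_forall_add_eq [NormedAddCommGroup F] [NormedSpace ℂ F]
    {E : Type*} [NormedAddCommGroup E] [NormedSpace ℂ E] {u : ι → ℂ × F}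
    (hu : LinearMap.range (Fintype.linearCombination ℝ u)
      = LinearMap.ker (Complex.imLm ∘ₗ LinearMap.fst ℝ ℂ F))
    {f : ℂ × F → E} (hf : DifferentiableOn ℂ f {p | 0 < p.1.im})
    (hinv : ∀ v ∈ AddSubgroup.closure (Set.range u), ∀ p ∈ {p : ℂ × F | 0 < p.1.im},
      f (p + v) = f p)
    {w : ℂ} (hw : 0 < w.im) (z : F) : f (w, z) = f (w, 0) := by
  set L := Fintype.linearCombination ℝ u
  have hL : ∀ t, (L t).1.im = 0 := fun t => by
    simpa [hu] using LinearMap.mem_range_self L t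
  set T : (ι → ℝ) → ℂ × F := fun t => L t + ((w.im * Complex.I : ℂ), 0)
  have hK : IsCompact (T '' Set.Icc 0 1) :=
    isCompact_Icc.image (L.continuous_of_finiteDimensional.add continuous_const)
  have hKH : T '' Set.Icc 0 1 ⊆ {p | 0 < p.1.im} := by
    rintro - ⟨t, -, rfl⟩
    simpa [T, hL] using hw
  have hopen : IsOpen {p : ℂ × F | 0 < p.1.im} :=
    isOpen_lt continuous_const (Complex.continuous_im.comp continuous_fst)
  refine Differentiable.apply_eq_apply_of_bounded (f := fun z => f (w, z)) (fun z => ?_)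
    ((hK.image_of_continuousOn (hf.continuousOn.mono hKH)).isBounded.subset ?_) z 0
  · exact ((hf _ hw).differentiableAt (hopen.mem_nhds hw)).comp z
      ((differentiableAt_const w).prodMk differentiableAt_id)
  · rintro - ⟨z, rfl⟩
    obtain ⟨x, hx⟩ : ((w.re : ℂ), z) ∈ LinearMap.range L := by simp [hu]
    obtain ⟨γ, hγ, t, ht, hLt⟩ := exists_mem_addSubgroupClosure_sub_mem_image_Icc u x
    refine ⟨T t, ⟨t, ht, rfl⟩, ?_⟩
    have hTt : T t = (w, z) + -γ := by
      have hLt' : L t = L x - γ := hLt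
      ext
      · simp only [T, hLt', hx, Prod.fst_add, Prod.fst_sub, Prod.fst_neg]
        linear_combination Complex.re_add_im w
      · simp only [T, hLt', hx, Prod.snd_add, Prod.snd_sub, Prod.snd_neg]
        abel
    exact hTt ▸ hinv _ (neg_mem hγ) (w, z) hw

end HalfSpace

lemma forall_add_ofReal_eq_of_dense {X : Type*} [TopologicalSpace X] [T2Space X] {g : ℂ → X}
    (hg : ContinuousOn g {w | 0 < w.im}) {S : Set ℝ} (hS : Dense S)
    (hinv : ∀ s ∈ S, ∀ w, 0 < w.im → g (w + s) = g w) :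
    ∀ w, 0 < w.im → ∀ t : ℝ, g (w + t) = g w := by
  intro w hw t
  have hcont : Continuous fun t : ℝ => g (w + t) :=
    hg.comp_continuous (by fun_prop) fun t => by simpa using hw
  exact congrFun (hcont.ext_on hS continuous_const fun s hs => hinv s hs w hw) t

lemma eq_of_forall_add_ofReal_eq {E : Type*} [NormedAddCommGroup E] [NormedSpace ℂ E]
    {g : ℂ → E} (hg : DifferentiableOn ℂ g {w | 0 < w.im})
    (hinv : ∀ w, 0 < w.im → ∀ t : ℝ, g (w + t) = g w) {w w' : ℂ} (hw : 0 < w.im)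
    (hw' : 0 < w'.im) : g w = g w' := by
  have hopen : IsOpen {w : ℂ | 0 < w.im} := isOpen_lt continuous_const Complex.continuous_im
  refine hopen.is_const_of_deriv_eq_zero (convex_halfSpace_im_gt 0).isPreconnected hg
    (fun w hw => ?_) hw hw'
  have hd : HasDerivAt g (deriv g w) (w + ((0 : ℝ) : ℂ)) := by
    simpa using ((hg w hw).differentiableAt (hopen.mem_nhds hw)).hasDerivAt
  have hline := hd.scomp (0 : ℝ) ((Complex.ofRealCLM.hasDerivAt (x := 0)).const_add w)
  rw [show g ∘ (fun t : ℝ => w + Complex.ofRealCLM t) = fun _ => g w from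
    funext (hinv w hw)] at hline
  simpa using hline.unique (hasDerivAt_const _ _)

section Inoue

variable {n : ℕ} {M : Matrix (Fin (2*n+1)) (Fin (2*n+1)) ℤ} {α : ℝ} {β : Fin n → ℂ}
  {a : Fin (2*n+1) → ℝ} {b : Fin n → Fin (2*n+1) → ℂ}

lemma inoue_maxGenEigenspace_eq_span (hβ : ∀ j, 0 < (β j).im)
    (hchar : (M.map (Int.cast : ℤ → ℂ)).charpoly
      = (X - C (α : ℂ)) * ∏ j, ((X - C (β j)) * (X - C (starRingEnd ℂ (β j)))))
    (ha0 : a ≠ 0) (ha : (M.map (Int.cast : ℤ → ℝ)).mulVec a = α • a) :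
    End.maxGenEigenspace (M.map (Int.cast : ℤ → ℂ)).mulVecLin α = ℂ ∙ fun i => (a i : ℂ) := by
  refine End.maxGenEigenspace_eq_span_singleton ⟨?_, ?_⟩ ?_
  · rw [End.mem_eigenspace_iff]
    funext i
    simpa [Matrix.map_map, Function.comp_def] using
      (Complex.ofRealHom.map_mulVec (M.map (Int.cast : ℤ → ℝ)) a i).symm.trans
        (congrArg Complex.ofRealHom (congrFun ha i))
  · exact fun h => ha0 (funext fun i => Complex.ofReal_eq_zero.mp (congrFun h i))
  · rw [charpoly_mulVecLin, hchar]
    refine rootMultiplicity_X_sub_C_mul ?_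
    simp only [IsRoot, eval_prod, eval_mul, eval_sub, eval_X, eval_C, Finset.prod_eq_zero_iff,
      Finset.mem_univ, true_and, mul_eq_zero, sub_eq_zero, not_exists, not_or]
    intro j
    constructor <;> intro h <;> have := congrArg Complex.im h <;> simp at this <;> linarith [hβ j]

lemma inoue_eq_zero_of_dotProduct_eq_zero (hβ : ∀ j, 0 < (β j).im)
    (hchar : (M.map (Int.cast : ℤ → ℂ)).charpoly
      = (X - C (α : ℂ)) * ∏ j, ((X - C (β j)) * (X - C (starRingEnd ℂ (β j)))))
    (ha0 : a ≠ 0) (ha : (M.map (Int.cast : ℤ → ℝ)).mulVec a = α • a)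
    (hbspan : Submodule.span ℂ (Set.range b)
      = ⨆ i, End.maxGenEigenspace (Matrix.mulVecLin (M.map (Int.cast : ℤ → ℂ))) (β i))
    {c : Fin (2*n+1) → ℂ} (hc : star c = c) (hca : c ⬝ᵥ (fun i => (a i : ℂ)) = 0)
    (hcb : ∀ j, c ⬝ᵥ b j = 0) : c = 0 := by
  set K := LinearMap.ker (dotProductBilin ℂ ℂ c)
  have hW : ∀ j, End.maxGenEigenspace (M.map (Int.cast : ℤ → ℂ)).mulVecLin (β j) ≤ K :=
    fun j => (le_iSup_of_le j le_rfl).trans <| hbspan ▸ Submodule.span_le.mpr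
      (Set.range_subset_iff.mpr hcb)
  have hK : K = ⊤ := by
    refine End.eq_top_of_forall_isRoot_charpoly_maxGenEigenspace_le_s15
      (M.map (Int.cast : ℤ → ℂ)).mulVecLin fun μ hμ => ?_
    rw [charpoly_mulVecLin, hchar] at hμ
    simp only [IsRoot, eval_prod, eval_mul, eval_sub, eval_X, eval_C, Finset.prod_eq_zero_iff,
      Finset.mem_univ, true_and, mul_eq_zero, sub_eq_zero] at hμ
    rcases hμ with rfl | ⟨j, rfl | rfl⟩
    · rw [inoue_maxGenEigenspace_eq_span hβ hchar ha0 ha, Submodule.span_singleton_le_iff_mem]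
      exact hca
    · exact hW j
    · intro v hv
      have hreal : (M.map (Int.cast : ℤ → ℂ)).map (starRingEnd ℂ) = M.map Int.cast := by
        ext; simp
      have hv' := hW j (by simpa using star_mem_maxGenEigenspace_mulVecLin hreal hv)
      simp only [K, LinearMap.mem_ker, dotProductBilin_apply_apply] at hv' ⊢
      -- `c` is real, so `c ⬝ᵥ v` is the conjugate of `c ⬝ᵥ star v`
      nth_rewrite 1 [← hc]
      rw [star_dotProduct, dotProduct_comm, hv', star_zero]
  funext i
  simpa [K] using (hK ▸ Submodule.mem_top : Pi.single i 1 ∈ K)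

lemma inoue_linearCombination_injective (hβ : ∀ j, 0 < (β j).im)
    (hchar : (M.map (Int.cast : ℤ → ℂ)).charpoly
      = (X - C (α : ℂ)) * ∏ j, ((X - C (β j)) * (X - C (starRingEnd ℂ (β j)))))
    (ha0 : a ≠ 0) (ha : (M.map (Int.cast : ℤ → ℝ)).mulVec a = α • a)
    (hbspan : Submodule.span ℂ (Set.range b)
      = ⨆ i, End.maxGenEigenspace (Matrix.mulVecLin (M.map (Int.cast : ℤ → ℂ))) (β i)) :
    Function.Injective (Fintype.linearCombination ℝ (inoueU n a b)) := by
  rw [← LinearMap.ker_eq_bot, Submodule.eq_bot_iff]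
  intro x hx
  rw [LinearMap.mem_ker, Fintype.linearCombination_apply, Prod.ext_iff] at hx
  have hc := inoue_eq_zero_of_dotProduct_eq_zero hβ hchar ha0 ha hbspan
    (c := fun i => (x i : ℂ)) (by ext; simp) ?_ fun j => ?_
  · exact funext fun i => Complex.ofReal_eq_zero.mp (congrFun hc i)
  · simpa [dotProduct, inoueU, Complex.real_smul, Prod.fst_sum] using hx.1
  · simpa [dotProduct, inoueU, Complex.real_smul, Prod.snd_sum] using congrFun hx.2 j

lemma inoue_apply_add_ofReal_eq {X : Type*} {f : ℂ × (Fin n → ℂ) → X}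
    (hinv : ∀ p ∈ {p : ℂ × (Fin n → ℂ) | 0 < p.1.im}, ∀ i : Fin (2*n+1),
      f (p + inoueU n a b i) = f p)
    (hz : ∀ w : ℂ, 0 < w.im → ∀ z, f (w, z) = f (w, 0)) :
    ∀ s ∈ AddSubgroup.closure (Set.range a), ∀ w : ℂ, 0 < w.im → f (w + s, 0) = f (w, 0) := by
  intro s hs
  have hs' := (AddSubgroup.closure_le (K := (AddSubgroup.closure
    (Set.range fun i => (a i : ℂ))).comap Complex.ofRealHom.toAddMonoidHom)).mpr
    (by rintro - ⟨i, rfl⟩; exact AddSubgroup.subset_closure (Set.mem_range_self i)) hs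
  refine map_add_eq_of_mem_addSubgroupClosure (U := {w : ℂ | 0 < w.im}) (f := fun w => f (w, 0))
    (by rintro - ⟨i, rfl⟩ w; simp) ?_ hs'
  rintro - ⟨i, rfl⟩ w hw
  calc f (w + a i, 0) = f (w + a i, fun j => b j i) := (hz _ (by simpa using hw) _).symm
    _ = f ((w, 0) + inoueU n a b i) := by simp [inoueU]
    _ = f (w, 0) := hinv (w, 0) hw i

end Inoue

theorem inoue_invariant_holomorphic_constant_general
    (n : ℕ)
    (M : Matrix (Fin (2*n+1)) (Fin (2*n+1)) ℤ)
    (α : ℝ) (hαirr : Irrational α)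
    (β : Fin n → ℂ) (hβ : ∀ j, 0 < (β j).im)
    (hchar : (M.map (Int.cast : ℤ → ℂ)).charpoly
      = (X - C (α : ℂ)) * ∏ j, ((X - C (β j)) * (X - C (starRingEnd ℂ (β j)))))
    (a : Fin (2*n+1) → ℝ) (ha0 : a ≠ 0)
    (ha : (M.map (Int.cast : ℤ → ℝ)).mulVec a = α • a)
    (b : Fin n → (Fin (2*n+1) → ℂ))
    (hbspan : Submodule.span ℂ (Set.range b)
      = ⨆ i, Module.End.maxGenEigenspace
        (Matrix.mulVecLin (M.map (Int.cast : ℤ → ℂ))) (β i))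
    (f : ℂ × (Fin n → ℂ) → ℂ)
    (hf : DifferentiableOn ℂ f {p : ℂ × (Fin n → ℂ) | 0 < p.1.im})
    (hinv : ∀ p ∈ {p : ℂ × (Fin n → ℂ) | 0 < p.1.im}, ∀ i : Fin (2*n+1),
      f (p + inoueU n a b i) = f p) :
    ∀ p ∈ {p : ℂ × (Fin n → ℂ) | 0 < p.1.im},
      ∀ q ∈ {p : ℂ × (Fin n → ℂ) | 0 < p.1.im}, f p = f q := by
  have hΛ : ∀ v ∈ AddSubgroup.closure (Set.range (inoueU n a b)),
      ∀ p ∈ {p : ℂ × (Fin n → ℂ) | 0 < p.1.im}, f (p + v) = f p := fun v =>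
    map_add_eq_of_mem_addSubgroupClosure (by rintro - ⟨i, rfl⟩ p; simp [inoueU])
      (by rintro - ⟨i, rfl⟩ p hp; exact hinv p hp i)
  have hrange := range_linearCombination_eq_ker_im_fst (fun i => by simp [inoueU])
    (inoue_linearCombination_injective hβ hchar ha0 ha hbspan) (by simp)
  have hz : ∀ w : ℂ, 0 < w.im → ∀ z, f (w, z) = f (w, 0) := fun w hw =>
    apply_eq_apply_zero_of_forall_add_eq hrange hf hΛ hw
  have hg : DifferentiableOn ℂ (fun w => f (w, 0)) {w | 0 < w.im} :=
    hf.comp (differentiableOn_id.prodMk (differentiableOn_const 0)) fun w hw => hw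
  have hreal := forall_add_ofReal_eq_of_dense hg.continuousOn
    (dense_addSubgroupClosure_range_of_mulVec_eq_smul M hαirr ha0 ha)
    (inoue_apply_add_ofReal_eq hinv hz)
  intro p hp q hq
  rw [← Prod.mk.eta (p := p), ← Prod.mk.eta (p := q), hz _ hp, hz _ hq]
  exact eq_of_forall_add_ofReal_eq hg hreal hp hq

/-- **Proposition (Endo–Pajitnov)**.  Every `H_M`-invariant holomorphic function on
`ℍ × ℂⁿ` is constant: if `f` is holomorphic on `ℍ × ℂⁿ` and `f(p + uᵢ) = f(p)` for every
`p ∈ ℍ × ℂⁿ` and every `i`, then `f` is constant on `ℍ × ℂⁿ`. -/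
theorem inoue_invariant_holomorphic_constant
    (n : ℕ) (hn : 1 ≤ n)
    (M : Matrix (Fin (2*n+1)) (Fin (2*n+1)) ℤ) (hdet : M.det = 1)
    (α : ℝ) (hα0 : 0 < α) (hα1 : α ≠ 1) (hαirr : Irrational α)
    (β : Fin n → ℂ) (hβ : ∀ j, 0 < (β j).im)
    (hchar : (M.map (Int.cast : ℤ → ℂ)).charpoly
      = (X - C (α : ℂ)) * ∏ j, ((X - C (β j)) * (X - C (starRingEnd ℂ (β j)))))
    (a : Fin (2*n+1) → ℝ) (ha0 : a ≠ 0)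
    (ha : (M.map (Int.cast : ℤ → ℝ)).mulVec a = α • a)
    (b : Fin n → (Fin (2*n+1) → ℂ))
    (hbmem : ∀ j, b j ∈ ⨆ i, Module.End.maxGenEigenspace
        (Matrix.mulVecLin (M.map (Int.cast : ℤ → ℂ))) (β i))
    (hbind : LinearIndependent ℂ b)
    (hbspan : Submodule.span ℂ (Set.range b)
      = ⨆ i, Module.End.maxGenEigenspace
        (Matrix.mulVecLin (M.map (Int.cast : ℤ → ℂ))) (β i))
    (f : ℂ × (Fin n → ℂ) → ℂ)
    (hf : DifferentiableOn ℂ f {p : ℂ × (Fin n → ℂ) | 0 < p.1.im})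
    (hinv : ∀ p ∈ {p : ℂ × (Fin n → ℂ) | 0 < p.1.im}, ∀ i : Fin (2*n+1),
      f (p + inoueU n a b i) = f p) :
    ∀ p ∈ {p : ℂ × (Fin n → ℂ) | 0 < p.1.im},
      ∀ q ∈ {p : ℂ × (Fin n → ℂ) | 0 < p.1.im}, f p = f q :=
  inoue_invariant_holomorphic_constant_general n M α hαirr β hβ hchar a ha0 ha b hbspan f hf hinv
end
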